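/- arXiv:1502.03451 — 6 statements merged into one kernel-verified Lean document; each statement's English description precedes it below -/
import Mathlib

section
/- Let P be a prime. Then every square submatrix of the P×P Fourier matrix W_P = (e^{2πi nm/P})_{n,m=0}^{P−1} has nonzero determinant (Chebotarev's theorem on roots of unity). -/
/-!
Work in the ring of integers of `ℚ(ζ)`, `ζ = e^{2πi/P}`, where `λ = ζ - 1` is prime and
`ζ ≡ 1 mod λ`. A kernel vector of the minor `(ζ^{r_i c_j})`, divided by the largest power of `λ`
dividing all its entries, gives a polynomial `f = ∑ b_j X^{c_j}` vanishing at the `k` distinct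
points `ζ^{r_i}`, so `∏ (X - ζ^{r_i}) ∣ f`; modulo `λ` this reads `(X - 1)^k ∣ f`. Applying the
Euler operator `X d/dX` up to `k - 1` times gives `∑ b_j c_j^m ≡ 0 mod λ` for `m < k`. The residue
field has characteristic `P`, so the `c_j` stay distinct modulo `λ`, and the Vandermonde matrix
forces every `b_j ≡ 0 mod λ`, contradicting the normalisation.
-/

open Polynomial

namespace Polynomial

variable {T : Type*} [CommRing T]

noncomputable def eulerDerivative (q : T[X]) : T[X] := X * derivative q

theorem X_sub_one_pow_dvd_eulerDerivative {s : ℕ} {q : T[X]} (h : (X - 1) ^ (s + 1) ∣ q) :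
    (X - 1) ^ s ∣ eulerDerivative q := by
  obtain ⟨u, rfl⟩ := h
  refine ⟨X * (C ((s : T) + 1) * u + (X - 1) * derivative u), ?_⟩
  simp only [eulerDerivative, derivative_mul, derivative_pow, derivative_sub, derivative_X,
    derivative_one, sub_zero, mul_one, Nat.add_sub_cancel]
  push_cast
  ring

theorem X_sub_one_pow_dvd_iterate_eulerDerivative {s m : ℕ} {q : T[X]}
    (h : (X - 1) ^ (s + m) ∣ q) : (X - 1) ^ s ∣ eulerDerivative^[m] q := by
  induction m generalizing q with
  | zero => exact h
  | succ m ih => exact ih (X_sub_one_pow_dvd_eulerDerivative h)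

theorem eulerDerivative_C_mul_X_pow (a : T) (n : ℕ) :
    eulerDerivative (C a * X ^ n) = C (a * n) * X ^ n := by
  rcases n with _ | n
  · simp [eulerDerivative]
  · rw [eulerDerivative, derivative_C_mul_X_pow]
    push_cast
    ring

variable {ι : Type*} [Fintype ι]

theorem iterate_eulerDerivative_sum (b : ι → T) (c : ι → ℕ) (m : ℕ) :
    eulerDerivative^[m] (∑ j, C (b j) * X ^ c j) = ∑ j, C (b j * (c j : T) ^ m) * X ^ c j := by
  induction m with
  | zero => simp
  | succ m ih =>
    rw [Function.iterate_succ_apply', ih, eulerDerivative, derivative_sum, Finset.mul_sum]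
    refine Finset.sum_congr rfl fun j _ => ?_
    rw [← eulerDerivative, eulerDerivative_C_mul_X_pow, pow_succ, mul_assoc]

theorem sum_mul_pow_eq_zero_of_X_sub_one_pow_dvd {k : ℕ} {b : ι → T} {c : ι → ℕ}
    (h : (X - 1) ^ k ∣ ∑ j, C (b j) * X ^ c j) {m : ℕ} (hm : m < k) :
    ∑ j, b j * (c j : T) ^ m = 0 := by
  have hdvd : X - 1 ∣ eulerDerivative^[m] (∑ j, C (b j) * X ^ c j) :=
    pow_one (X - 1 : T[X]) ▸ X_sub_one_pow_dvd_iterate_eulerDerivative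
      ((pow_dvd_pow _ (by omega)).trans h)
  rw [iterate_eulerDerivative_sum, ← C_1, dvd_iff_isRoot] at hdvd
  simpa [eval_finsetSum] using hdvd

theorem eq_zero_of_X_sub_one_pow_dvd [IsDomain T] {k : ℕ} {b : Fin k → T} {c : Fin k → ℕ}
    (hc : Function.Injective fun j => (c j : T)) (h : (X - 1) ^ k ∣ ∑ j, C (b j) * X ^ c j) :
    b = 0 :=
  Matrix.eq_zero_of_forall_pow_sum_mul_pow_eq_zero hc fun m =>
    sum_mul_pow_eq_zero_of_X_sub_one_pow_dvd h m.2

theorem prod_X_sub_C_dvd_of_isRoot [IsDomain T] {z : ι → T} (hz : Function.Injective z)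
    {f : T[X]} (h : ∀ i, f.IsRoot (z i)) : ∏ i, (X - C (z i)) ∣ f := by
  rcases eq_or_ne f 0 with rfl | hf
  · exact dvd_zero _
  have hle : Finset.univ.val.map z ≤ f.roots :=
    (Multiset.le_iff_subset (Finset.univ.nodup.map hz)).2 fun x hx => by
      obtain ⟨i, -, rfl⟩ := Multiset.mem_map.1 hx
      exact (mem_roots hf).2 (h i)
  have := (Multiset.prod_X_sub_C_dvd_iff_le_roots hf _).2 hle
  rwa [Multiset.map_map] at this

end Polynomial

theorem exists_pow_smul_not_dvd {R : Type*} [CommMonoidWithZero R] [WfDvdMonoid R]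
    {ι : Type*} {p : R} (hp : ¬IsUnit p) {a : ι → R} (ha : a ≠ 0) :
    ∃ (n : ℕ) (b : ι → R), a = p ^ n • b ∧ ∃ j, ¬ p ∣ b j := by
  obtain ⟨j₀, hj₀⟩ := Function.ne_iff.1 ha
  obtain ⟨-, ⟨n, b, rfl, rfl⟩, hmin⟩ := wellFounded_dvdNotUnit.has_min
    {x | ∃ (n : ℕ) (b : ι → R), a = p ^ n • b ∧ b j₀ = x} ⟨_, 0, a, by simp, rfl⟩
  refine ⟨n, b, rfl, ?_⟩
  by_contra! hdvd
  choose b' hb' using hdvd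
  have hb'₀ : b' j₀ ≠ 0 := by
    rintro h
    exact hj₀ (by simp [hb' j₀, h])
  refine hmin (b' j₀) ⟨n + 1, b', funext fun j => ?_, rfl⟩
    ⟨hb'₀, p, hp, (hb' j₀).trans (mul_comm _ _)⟩
  simp [hb' j, pow_succ, mul_assoc]

theorem Matrix.det_of_pow_mul_ne_zero {R : Type*} [CommRing R] [IsDomain R] [WfDvdMonoid R]
    {p ζ : R} (hp : Prime p) (hζ : p ∣ ζ - 1) {k : ℕ} {r c : Fin k → ℕ}
    (hr : Function.Injective fun i => ζ ^ r i)
    (hc : Function.Injective fun j => (c j : R ⧸ Ideal.span {p})) :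
    (Matrix.of fun i j => ζ ^ (r i * c j)).det ≠ 0 := by
  intro hdet
  obtain ⟨a, ha, hMa⟩ := Matrix.exists_mulVec_eq_zero_iff.2 hdet
  obtain ⟨n, b, rfl, j₀, hj₀⟩ := exists_pow_smul_not_dvd hp.not_isUnit ha
  rw [Matrix.mulVec_smul, smul_eq_zero_iff_right (pow_ne_zero n hp.ne_zero)] at hMa
  set f : R[X] := ∑ j, C (b j) * X ^ c j
  have hroot (i : Fin k) : f.IsRoot (ζ ^ r i) := by
    have := congrFun hMa i
    simp only [Matrix.mulVec, dotProduct, Matrix.of_apply, Pi.zero_apply] at this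
    simp only [f, IsRoot.def, eval_finsetSum, eval_mul, eval_C, eval_pow, eval_X, ← pow_mul]
    simpa only [mul_comm] using this
  set π := Ideal.Quotient.mk (Ideal.span {p})
  have hπζ : π ζ = 1 := by
    rw [← map_one π, Ideal.Quotient.mk_eq_mk_iff_sub_mem, Ideal.mem_span_singleton]
    exact hζ
  have hdvd : (X - 1) ^ k ∣ ∑ j, C (π (b j)) * X ^ c j := by
    have := Polynomial.map_dvd π (prod_X_sub_C_dvd_of_isRoot hr hroot)
    simpa [f, Polynomial.map_prod, Polynomial.map_sum, hπζ] using this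
  have : (Ideal.span {p}).IsPrime := (Ideal.span_singleton_prime hp.ne_zero).2 hp
  have := congrFun (eq_zero_of_X_sub_one_pow_dvd hc hdvd) j₀
  exact hj₀ (Ideal.mem_span_singleton.1 (Ideal.Quotient.eq_zero_iff_mem.1 this))

open IntermediateField
open scoped NumberField

theorem IsPrimitiveRoot.isCyclotomicExtension_adjoin {L : Type*} [Field L] [CharZero L] {n : ℕ}
    [NeZero n] {ζ : L} (hζ : IsPrimitiveRoot ζ n) : IsCyclotomicExtension {n} ℚ ℚ⟮ζ⟯ := by
  change IsCyclotomicExtension {n} ℚ ℚ⟮ζ⟯.toSubalgebra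
  rw [adjoin_simple_toSubalgebra_of_isAlgebraic
    (hζ.isIntegral (NeZero.pos n)).tower_top.isAlgebraic]
  exact hζ.adjoin_isCyclotomicExtension ℚ

theorem IsPrimitiveRoot.natCast_injOn_quotient_span_toInteger_sub_one {p : ℕ} [Fact p.Prime]
    {K : Type*} [Field K] [CharZero K] [IsCyclotomicExtension {p} ℚ K] {ζ : K}
    (hζ : IsPrimitiveRoot ζ p) :
    Set.InjOn (fun n : ℕ => (n : 𝓞 K ⧸ Ideal.span {hζ.toInteger - 1})) (Set.Iio p) := by
  have := IsCyclotomicExtension.numberField {p} ℚ K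
  have : IsCyclotomicExtension {p ^ (0 + 1)} ℚ K := by simpa
  intro m hm n hn hmn
  simp only at hmn
  rw [← map_natCast (Ideal.Quotient.mk _), ← map_natCast (Ideal.Quotient.mk _),
    Ideal.Quotient.mk_eq_mk_iff_sub_mem, Ideal.mem_span_singleton] at hmn
  have hdvd : (p : ℤ) ∣ (m : ℤ) - n :=
    (IsCyclotomicExtension.Rat.zeta_sub_one_dvd_intCast_iff p 0 (by simpa using hζ)).1
      (by push_cast; exact hmn)
  rw [Set.mem_Iio] at hm hn
  have := Int.eq_zero_of_abs_lt_dvd hdvd (abs_sub_lt_iff.2 ⟨by omega, by omega⟩)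
  omega

/-- Chebotarev's theorem on roots of unity: Let `P` be prime. Every
square submatrix of the `P×P` Fourier matrix `W_P = (e^{2πi nm/P})` has nonzero
determinant. -/
theorem chebotarev_fourier_minors (P : ℕ) (hP : P.Prime)
    (W : Matrix (Fin P) (Fin P) ℂ)
    (hW : ∀ n m : Fin P, W n m =
      Complex.exp (2 * Real.pi * Complex.I * (n : ℕ) * (m : ℕ) / P))
    (k : ℕ) (r : Fin k → Fin P) (c : Fin k → Fin P)
    (hr : Function.Injective r) (hc : Function.Injective c) :
    Matrix.det (fun i j => W (r i) (c j)) ≠ 0 := by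
  have : Fact P.Prime := ⟨hP⟩
  set ζ : ℂ := Complex.exp (2 * Real.pi * Complex.I / P)
  have hζ : IsPrimitiveRoot ζ P := Complex.isPrimitiveRoot_exp P hP.ne_zero
  have := hζ.isCyclotomicExtension_adjoin
  have := IsCyclotomicExtension.numberField {P} ℚ ℚ⟮ζ⟯
  have : WfDvdMonoid (𝓞 ℚ⟮ζ⟯) := IsNoetherianRing.wfDvdMonoid
  have hζK : IsPrimitiveRoot (⟨ζ, mem_adjoin_simple_self ℚ ζ⟩ : ℚ⟮ζ⟯) P :=
    hζ.of_map_of_injective (f := algebraMap ℚ⟮ζ⟯ ℂ) (algebraMap ℚ⟮ζ⟯ ℂ).injective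
  let φ : 𝓞 ℚ⟮ζ⟯ →+* ℂ := (algebraMap ℚ⟮ζ⟯ ℂ).comp (algebraMap _ ℚ⟮ζ⟯)
  have hφ : Function.Injective φ :=
    (algebraMap ℚ⟮ζ⟯ ℂ).injective.comp NumberField.RingOfIntegers.coe_injective
  have hWφ : (fun i j => W (r i) (c j)) =
      φ.mapMatrix (Matrix.of fun i j => hζK.toInteger ^ ((r i : ℕ) * (c j : ℕ))) := by
    ext i j
    rw [hW, RingHom.mapMatrix_apply, Matrix.map_apply, Matrix.of_apply, map_pow,
      show φ hζK.toInteger = ζ from rfl, ← Complex.exp_nat_mul]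
    push_cast
    ring_nf
  rw [hWφ, ← RingHom.map_det, map_ne_zero_iff φ hφ]
  refine Matrix.det_of_pow_mul_ne_zero hζK.zeta_sub_one_prime' dvd_rfl ?_ ?_
  · exact fun i i' h => hr (Fin.val_injective
      (hζK.toInteger_isPrimitiveRoot.pow_inj (r i).isLt (r i').isLt h))
  · exact fun j j' h => hc (Fin.val_injective
      (hζK.natCast_injOn_quotient_span_toInteger_sub_one (c j).isLt (c j').isLt h))
end

section
/- Let P be prime. For the P×P Fourier matrix W_P, the P×P² full Gabor system matrix G(c) = [D₀W_P | D₁W_P | ⋯ | D_{P−1}W_P], where D_k is the diagonal matrix with diagonal T^k c, has the property that for a dense open subset of c ∈ ℂ^P, every minor of G(c) is nonzero; in particular, G(c) has full Spark P+1 for such c. -/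
open scoped Classical

/-- The `P × P²` full Gabor system matrix `G(c) = [D₀W_P | D₁W_P | ⋯ | D_{P-1}W_P]`,
where `D_k = diag(T^k c)` and `W_P` is the `P×P` Fourier matrix. The column indexed by
`(k, q)` has entries `n ↦ c_{n-k} · e^{2πi n q / P}`. -/
noncomputable def gaborMatrix (P : ℕ) (c : Fin P → ℂ) :
    Matrix (Fin P) (Fin P × Fin P) ℂ :=
  fun n kq => c (n - kq.1) *
    Complex.exp (2 * Real.pi * Complex.I * (n : ℕ) * (kq.2 : ℕ) / P)

/-!
Expanding a `k × k` minor of `G(c)` as a polynomial in `c₀, …, c_{P-1}`, the permutation `σ`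
contributes the monomial `∏ᵢ c_{rᵢ - κ_{σ i}}`, where `(κⱼ, qⱼ)` are the chosen columns. Take `σ`
whose exponent vector is lexicographically maximal: an exchange argument shows that every
permutation with the same monomial sends each row into the same block `{j | κⱼ = b}` of columns.
The coefficient of that monomial is therefore, up to sign, a product of square minors of the
Fourier matrix `W_P`, which are nonzero by Chebotarev's theorem since `P` is prime. So every minor
is a nonzero polynomial in `c`, and so is their product, whose non-vanishing locus is open and
dense.

Chebotarev's theorem: `det (Xᵢ ^ bⱼ) = V · Q` with `V` the Vandermonde determinant. Specialising
`Xᵢ ↦ tⁱ` and cancelling powers of `t - 1` gives `Q(1, …, 1) · ∏ (j - i) = ∏ (bⱼ - bᵢ)`, which is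
prime to `P`. An integer polynomial vanishing at `(ζ^{a₁}, …, ζ^{aₘ})` becomes divisible by the
cyclotomic polynomial `Φ_P` after `Xᵢ ↦ t^{aᵢ}`, so its value at `(1, …, 1)` is divisible by
`Φ_P(1) = P`. Hence `Q(ζ^{a₁}, …, ζ^{aₘ}) ≠ 0`, and `V(ζ^{a₁}, …, ζ^{aₘ}) ≠ 0` as the `ζ^{aᵢ}` are
distinct.
-/

open Finset Matrix

theorem Finset.prod_dvd_of_forall_prime_dvd {ι M₀ : Type*} [CommMonoidWithZero M₀]
    [IsCancelMulZero M₀] [DecidableEq ι] {s : Finset ι} {p : ι → M₀} {n : M₀}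
    (hp : ∀ i ∈ s, Prime (p i)) (hp_inj : ∀ i ∈ s, ∀ j ∈ s, p i ∣ p j → i = j)
    (hdvd : ∀ i ∈ s, p i ∣ n) : ∏ i ∈ s, p i ∣ n := by
  induction s using Finset.induction_on generalizing n with
  | empty => simp
  | insert a s ha ih =>
    obtain ⟨k, rfl⟩ := hdvd a (mem_insert_self a s)
    rw [prod_insert ha]
    refine mul_dvd_mul_left _ (ih (fun i hi => hp i (mem_insert_of_mem hi))
      (fun i hi j hj => hp_inj i (mem_insert_of_mem hi) j (mem_insert_of_mem hj)) fun i hi => ?_)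
    refine ((hp i (mem_insert_of_mem hi)).dvd_or_dvd (hdvd i (mem_insert_of_mem hi))).resolve_left
      fun h => ha ?_
    rwa [← hp_inj i (mem_insert_of_mem hi) a (mem_insert_self a s) h]

namespace MvPolynomial

variable {R σ : Type*} [CommRing R]

theorem X_sub_X_dvd_of_aeval_update_eq_zero [DecidableEq σ] (i j : σ) {f : MvPolynomial σ R}
    (hf : aeval (Function.update X j (X i) : σ → MvPolynomial σ R) f = 0) : X j - X i ∣ f := by
  let mk := Ideal.Quotient.mkₐ R (Ideal.span {(X j - X i : MvPolynomial σ R)})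
  have hcomp : mk.comp (aeval (Function.update X j (X i))) = mk := by
    ext t
    rcases eq_or_ne t j with rfl | htj
    · simp [mk, Ideal.Quotient.mkₐ_eq_mk, Ideal.Quotient.eq, Ideal.mem_span_singleton]
      exact dvd_sub_comm.1 dvd_rfl
    · simp [htj]
  have := congr($hcomp f)
  rwa [AlgHom.comp_apply, hf, map_zero, eq_comm, Ideal.Quotient.mkₐ_eq_mk,
    Ideal.Quotient.eq_zero_iff_mem, Ideal.mem_span_singleton] at this

theorem prime_X_sub_X [IsDomain R] {i j : σ} (h : i ≠ j) :
    Prime (X j - X i : MvPolynomial σ R) := by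
  let e : σ ≃ Option {t : σ // t ≠ j} := (Equiv.optionSubtypeNe j).symm
  let T : MvPolynomial σ R ≃ₐ[R] Polynomial (MvPolynomial {t : σ // t ≠ j} R) :=
    (renameEquiv R e).trans (optionEquivLeft R _)
  have hT : T (X j - X i) = Polynomial.X - Polynomial.C (X ⟨i, h⟩) := by
    simp [T, e, Equiv.optionSubtypeNe_symm_of_ne h, optionEquivLeft_X_some,
      optionEquivLeft_X_none]
  exact (MulEquiv.prime_iff T).1 (hT ▸ Polynomial.prime_X_sub_C _)

theorem eq_of_X_sub_X_dvd [Nontrivial R] [LinearOrder σ] {i j i' j' : σ} (hij : i < j)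
    (hij' : i' < j') (h : (X j - X i : MvPolynomial σ R) ∣ X j' - X i') : i = i' ∧ j = j' := by
  have hφ : aeval (Function.update X j (X i) : σ → MvPolynomial σ R)
      (X j' - X i' : MvPolynomial σ R) = 0 := by
    obtain ⟨g, hg⟩ := h
    simp [hg, Function.update_of_ne hij.ne]
  simp only [map_sub, aeval_X, Function.update_apply, sub_eq_zero] at hφ
  split_ifs at hφ <;> grind [X_injective]

theorem det_vandermonde_X_dvd_det_X_pow [IsDomain R] {m : ℕ} (b : Fin m → ℕ) :
    det (vandermonde (X : Fin m → MvPolynomial (Fin m) R)) ∣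
      det (of fun i j => X i ^ b j : Matrix (Fin m) (Fin m) (MvPolynomial (Fin m) R)) := by
  have hlt : ∀ p ∈ univ.sigma fun i : Fin m => Ioi i, p.1 < p.2 :=
    fun p hp => mem_Ioi.1 (mem_sigma.1 hp).2
  rw [det_vandermonde, prod_sigma']
  refine prod_dvd_of_forall_prime_dvd (fun p hp => prime_X_sub_X (hlt p hp).ne)
    (fun p hp q hq h => ?_) fun p hp => X_sub_X_dvd_of_aeval_update_eq_zero _ _ ?_
  · obtain ⟨h1, h2⟩ := eq_of_X_sub_X_dvd (hlt p hp) (hlt q hq) h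
    exact Sigma.ext h1 (heq_of_eq h2)
  · rw [AlgHom.map_det]
    refine det_zero_of_row_eq (hlt p hp).ne' ?_
    ext j
    simp [Function.update_of_ne (hlt p hp).ne]

theorem aeval_aeval_X_pow {A : Type*} [CommRing A] [Algebra R A] (x : A) (u : σ → ℕ)
    (f : MvPolynomial σ R) :
    Polynomial.aeval x (aeval (fun i => (Polynomial.X : Polynomial R) ^ u i) f)
      = aeval (fun i => x ^ u i) f := by
  simp [comp_aeval_apply]

end MvPolynomial

namespace Polynomial

theorem exists_det_vandermonde_X_pow_eq {m : ℕ} (u : Fin m → ℕ) :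
    ∃ S : ℤ[X], det (vandermonde fun i => (X : ℤ[X]) ^ u i)
        = (X - 1) ^ (∑ i : Fin m, #(Ioi i)) * S ∧
      S.eval 1 = det (vandermonde fun i => (u i : ℤ)) := by
  refine ⟨∏ i, ∏ j ∈ Ioi i, (∑ k ∈ range (u j), X ^ k - ∑ k ∈ range (u i), X ^ k), ?_, ?_⟩
  · simp_rw [det_vandermonde, ← prod_pow_eq_pow_sum, ← prod_const, ← prod_mul_distrib]
    refine prod_congr rfl fun i _ => prod_congr rfl fun j _ => ?_
    rw [mul_sub, mul_comm, geom_sum_mul, mul_comm, geom_sum_mul]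
    ring
  · simp [eval_prod, det_vandermonde]

end Polynomial

open Polynomial in
theorem det_vandermonde_natCast_eq_mul_aeval_one {m : ℕ} {b : Fin m → ℕ}
    {Q : MvPolynomial (Fin m) ℤ}
    (hQ : det (of fun i j => MvPolynomial.X i ^ b j) = det (vandermonde MvPolynomial.X) * Q) :
    det (vandermonde fun i => (b i : ℤ))
      = det (vandermonde fun i : Fin m => ((i : ℕ) : ℤ)) * MvPolynomial.aeval (fun _ => 1) Q := by
  let ψ : MvPolynomial (Fin m) ℤ →ₐ[ℤ] ℤ[X] := MvPolynomial.aeval fun i => X ^ (i : ℕ)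
  obtain ⟨Sb, hSb, hSb_one⟩ := exists_det_vandermonde_X_pow_eq b
  obtain ⟨S, hS, hS_one⟩ := exists_det_vandermonde_X_pow_eq fun i : Fin m => (i : ℕ)
  have hψ := congrArg ψ hQ
  have hD : ψ.mapMatrix (of fun i j => MvPolynomial.X i ^ b j)
      = (vandermonde fun j => (X : ℤ[X]) ^ b j)ᵀ := by
    ext i j
    simp [ψ, vandermonde_apply, ← pow_mul, mul_comm]
  have hV : ψ.mapMatrix (vandermonde MvPolynomial.X)
      = vandermonde fun i => (X : ℤ[X]) ^ (i : ℕ) := by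
    ext i j
    simp [ψ, vandermonde_apply]
  rw [map_mul, AlgHom.map_det, AlgHom.map_det, hD, hV, det_transpose, hSb, hS, mul_assoc] at hψ
  have hX : (X - 1 : ℤ[X]) ^ (∑ i : Fin m, #(Ioi i)) ≠ 0 := pow_ne_zero _ (X_sub_C_ne_zero 1)
  have := congrArg (eval 1) (mul_left_cancel₀ hX hψ)
  rw [eval_mul, hSb_one, hS_one, ← coe_aeval_eq_eval, MvPolynomial.aeval_aeval_X_pow] at this
  simpa only [one_pow] using this

theorem Nat.Prime.not_dvd_det_vandermonde {P m : ℕ} (hP : P.Prime) {b : Fin m → ℕ}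
    (hb : Function.Injective b) (hbP : ∀ j, b j < P) :
    ¬ (P : ℤ) ∣ det (vandermonde fun i => (b i : ℤ)) := by
  have : Fact P.Prime := ⟨hP⟩
  rw [← ZMod.intCast_zmod_eq_zero_iff_dvd, ← eq_intCast (Int.castRingHom (ZMod P)),
    RingHom.map_det]
  have hmap : (Int.castRingHom (ZMod P)).mapMatrix (vandermonde fun i => (b i : ℤ))
      = vandermonde fun i => (b i : ZMod P) := by
    ext
    simp [vandermonde_apply]
  rw [hmap]
  refine det_vandermonde_ne_zero_iff.2 fun i j h => hb ?_
  rwa [ZMod.natCast_eq_natCast_iff' _ _ P, Nat.mod_eq_of_lt (hbP i),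
    Nat.mod_eq_of_lt (hbP j)] at h

open Polynomial in
theorem IsPrimitiveRoot.aeval_pow_ne_zero {K σ : Type*} [Field K] [CharZero K] {P : ℕ}
    [Fact P.Prime] {ζ : K} (hζ : IsPrimitiveRoot ζ P) {f : MvPolynomial σ ℤ}
    (hf : ¬ (P : ℤ) ∣ MvPolynomial.aeval (fun _ => 1) f) (a : σ → ℕ) :
    MvPolynomial.aeval (fun i => ζ ^ a i) f ≠ 0 := by
  have hP := (Fact.out : P.Prime).pos
  rw [← MvPolynomial.aeval_aeval_X_pow]
  intro h
  obtain ⟨F, hF⟩ := minpoly.isIntegrallyClosed_dvd (hζ.isIntegral hP) h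
  rw [← cyclotomic_eq_minpoly hζ hP] at hF
  have := congrArg (aeval (1 : ℤ)) hF
  rw [MvPolynomial.aeval_aeval_X_pow, map_mul, coe_aeval_eq_eval,
    eval_one_cyclotomic_prime] at this
  simp only [one_pow] at this
  exact hf ⟨_, this⟩

/-- Chebotarev's theorem on roots of unity. -/
theorem IsPrimitiveRoot.det_pow_mul_ne_zero {K : Type*} [Field K] [CharZero K] {P : ℕ}
    (hP : P.Prime) {ζ : K} (hζ : IsPrimitiveRoot ζ P) {m : ℕ} {a b : Fin m → ℕ}
    (ha : Function.Injective a) (hb : Function.Injective b) (haP : ∀ i, a i < P)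
    (hbP : ∀ j, b j < P) :
    det (of fun i j => ζ ^ (a i * b j)) ≠ 0 := by
  have : Fact P.Prime := ⟨hP⟩
  obtain ⟨Q, hQ⟩ := MvPolynomial.det_vandermonde_X_dvd_det_X_pow (R := ℤ) b
  have hQ_one : ¬ (P : ℤ) ∣ MvPolynomial.aeval (fun _ => 1) Q := fun h =>
    hP.not_dvd_det_vandermonde hb hbP
      (det_vandermonde_natCast_eq_mul_aeval_one hQ ▸ dvd_mul_of_dvd_right h _)
  let θ : MvPolynomial (Fin m) ℤ →ₐ[ℤ] K := MvPolynomial.aeval fun i => ζ ^ a i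
  have hD : θ.mapMatrix (of fun i j => MvPolynomial.X i ^ b j) = of fun i j => ζ ^ (a i * b j) := by
    ext i j
    simp [θ, pow_mul]
  have hV : θ.mapMatrix (vandermonde MvPolynomial.X) = vandermonde fun i => ζ ^ a i := by
    ext i j
    simp [θ, vandermonde_apply]
  have hθ := congrArg θ hQ
  rw [map_mul, AlgHom.map_det, AlgHom.map_det, hD, hV] at hθ
  rw [hθ]
  refine mul_ne_zero (det_vandermonde_ne_zero_iff.2 fun i j h => ha ?_)
    (hζ.aeval_pow_ne_zero hQ_one a)
  exact hζ.pow_inj (haP i) (haP j) h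

section PermExponent

open Equiv

variable {ι G : Type*} [Fintype ι]

noncomputable def permExponent [Sub G] (n κ : ι → G) (σ : Perm ι) : G →₀ ℕ :=
  ∑ i, Finsupp.single (n i - κ (σ i)) 1

theorem permExponent_mul_swap [DecidableEq ι] [Sub G] (n κ : ι → G) (τ : Perm ι) {i j : ι}
    (hij : i ≠ j) :
    permExponent n κ (τ * swap i j) + Finsupp.single (n i - κ (τ i)) 1
        + Finsupp.single (n j - κ (τ j)) 1
      = permExponent n κ τ + Finsupp.single (n i - κ (τ j)) 1
        + Finsupp.single (n j - κ (τ i)) 1 := by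
  have hj : j ∈ univ.erase i := mem_erase.2 ⟨hij.symm, mem_univ j⟩
  simp only [permExponent, ← add_sum_erase _ _ (mem_univ i), ← add_sum_erase _ _ hj,
    Perm.mul_apply, swap_apply_left, swap_apply_right]
  have hrest : ∑ k ∈ (univ.erase i).erase j, Finsupp.single (n k - κ (τ (swap i j k))) 1
      = ∑ k ∈ (univ.erase i).erase j, Finsupp.single (n k - κ (τ k)) 1 := by
    refine sum_congr rfl fun k hk => ?_
    obtain ⟨hkj, hki⟩ : k ≠ j ∧ k ≠ i := ⟨(mem_erase.1 hk).1, (mem_erase.1 (mem_erase.1 hk).2).1⟩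
    rw [swap_apply_of_ne_of_ne hki hkj]
  rw [hrest]
  abel

theorem toLex_permExponent_lt_mul_swap [DecidableEq ι] [Sub G] [LinearOrder G] {n κ : ι → G}
    {τ : Perm ι} {i j : ι} (hij : i ≠ j) (hi : n i - κ (τ j) < n i - κ (τ i))
    (hj : n i - κ (τ j) < n j - κ (τ j)) :
    toLex (permExponent n κ τ) < toLex (permExponent n κ (τ * swap i j)) := by
  -- The swap trades the values `n i - κ (τ i)` and `n j - κ (τ j)` for `v` and `u`: nothing
  -- changes below `min v u`, and the count at `min v u` goes up.
  set v := n i - κ (τ j)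
  set u := n j - κ (τ i)
  set w := min v u
  have hval : ∀ x ≤ w, permExponent n κ (τ * swap i j) x
      = permExponent n κ τ x + Finsupp.single v 1 x + Finsupp.single u 1 x := by
    intro x hx
    have := congrArg (· x) (permExponent_mul_swap n κ τ hij)
    simp only [Finsupp.add_apply] at this
    rwa [Finsupp.single_eq_of_ne (hx.trans_lt ((min_le_left _ _).trans_lt hi)).ne,
      Finsupp.single_eq_of_ne (hx.trans_lt ((min_le_left _ _).trans_lt hj)).ne,
      add_zero, add_zero] at this
  rw [Finsupp.Lex.lt_iff]
  refine ⟨w, fun x hx => ?_, ?_⟩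
  · rw [ofLex_toLex, ofLex_toLex, hval x hx.le,
      Finsupp.single_eq_of_ne (hx.trans_le (min_le_left _ _)).ne,
      Finsupp.single_eq_of_ne (hx.trans_le (min_le_right _ _)).ne, add_zero, add_zero]
  · rw [ofLex_toLex, ofLex_toLex, hval w le_rfl]
    obtain h | h : w = v ∨ w = u := min_choice _ _
    · rw [h, Finsupp.single_eq_same]
      omega
    · rw [h, Finsupp.single_eq_same]
      omega

theorem exists_sub_eq_of_permExponent_eq [Sub G] {n κ : ι → G} {σ τ : Perm ι}
    (hexp : permExponent n κ σ = permExponent n κ τ) {i : ι} (hi : κ (σ i) ≠ κ (τ i)) :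
    ∃ j, κ (σ j) ≠ κ (τ j) ∧ n j - κ (σ j) = n i - κ (τ i) := by
  let D := univ.filter fun i => κ (σ i) ≠ κ (τ i)
  have hsumD : ∑ i ∈ D, Finsupp.single (n i - κ (σ i)) 1
      = ∑ i ∈ D, Finsupp.single (n i - κ (τ i)) 1 := by
    simp only [permExponent] at hexp
    rw [← sum_filter_add_sum_filter_not univ fun i => κ (σ i) ≠ κ (τ i),
      ← sum_filter_add_sum_filter_not univ fun i => κ (σ i) ≠ κ (τ i)] at hexp
    refine add_right_cancel (hexp.trans (congrArg _ (sum_congr rfl fun i hi => ?_)))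
    rw [not_not.1 (mem_filter.1 hi).2]
  have hcount := congrArg (· (n i - κ (τ i))) hsumD
  simp only [Finsupp.finsetSum_apply, Finsupp.single_apply, sum_boole, Nat.cast_id] at hcount
  have hpos : 0 < #(D.filter fun j => n j - κ (τ j) = n i - κ (τ i)) :=
    card_pos.2 ⟨i, mem_filter.2 ⟨mem_filter.2 ⟨mem_univ i, hi⟩, rfl⟩⟩
  obtain ⟨j, hj⟩ := card_pos.1 (hcount ▸ hpos)
  exact ⟨j, (mem_filter.1 (mem_filter.1 hj).1).2, (mem_filter.1 hj).2⟩

theorem card_filter_comp_perm_eq {α : Type*} (κ : ι → α) (σ τ : Perm ι) (b : α) :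
    #{i | κ (σ i) = b} = #{i | κ (τ i) = b} := by
  simp only [card_filter]
  rw [Equiv.sum_comp σ fun j => if κ j = b then 1 else 0,
    Equiv.sum_comp τ fun j => if κ j = b then 1 else 0]

theorem exists_comp_perm_eq_and_ne {α : Type*} (κ : ι → α) (σ τ : Perm ι) {i : ι}
    (hi : κ (τ i) ≠ κ (σ i)) : ∃ j, κ (τ j) = κ (σ i) ∧ κ (σ j) ≠ κ (σ i) := by
  by_contra! h
  have hsub : univ.filter (fun j => κ (τ j) = κ (σ i))
      ⊆ univ.filter (fun j => κ (σ j) = κ (σ i)) :=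
    fun j hj => mem_filter.2 ⟨mem_univ j, h j (mem_filter.1 hj).2⟩
  have heq := eq_of_subset_of_card_le hsub (card_filter_comp_perm_eq κ σ τ _).le
  have hmem : i ∈ univ.filter (fun j => κ (σ j) = κ (σ i)) := by simp
  rw [← heq] at hmem
  exact hi (mem_filter.1 hmem).2

theorem exists_toLex_permExponent_lt [DecidableEq ι] [AddGroup G] [LinearOrder G]
    {n κ : ι → G} (hn : Function.Injective n) {σ τ : Perm ι}
    (hexp : permExponent n κ σ = permExponent n κ τ) (hne : κ ∘ σ ≠ κ ∘ τ) :
    ∃ τ' : Perm ι, toLex (permExponent n κ τ) < toLex (permExponent n κ τ') := by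
  -- `i₀` minimises `n i - κ (σ i)` over the rows where `σ` and `τ` choose different blocks, and
  -- `i₁` is a row that `τ` sends into the block of `σ i₀` but `σ` does not; exchanging the
  -- columns `τ` assigns to `i₀` and `i₁` creates the value `n i₀ - κ (σ i₀)`, below both values
  -- it removes.
  let D := univ.filter fun i => κ (σ i) ≠ κ (τ i)
  obtain ⟨i₀, hi₀D, hi₀⟩ := D.exists_min_image (fun i => n i - κ (σ i)) <| by
    obtain ⟨i, hi⟩ := Function.ne_iff.1 hne
    exact ⟨i, mem_filter.2 ⟨mem_univ i, hi⟩⟩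
  replace hi₀D := (mem_filter.1 hi₀D).2
  have hle : ∀ i, κ (σ i) ≠ κ (τ i) → n i₀ - κ (σ i₀) ≤ n i - κ (τ i) := fun i hi =>
    let ⟨j, hj, hj_eq⟩ := exists_sub_eq_of_permExponent_eq hexp hi
    hj_eq ▸ hi₀ j (mem_filter.2 ⟨mem_univ j, hj⟩)
  obtain ⟨i₁, hi₁, hi₁'⟩ := exists_comp_perm_eq_and_ne κ σ τ hi₀D.symm
  have hi₀₁ : i₀ ≠ i₁ := by
    rintro rfl
    exact hi₀D hi₁.symm
  refine ⟨τ * swap i₀ i₁, toLex_permExponent_lt_mul_swap hi₀₁ ?_ ?_⟩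
  · rw [hi₁]
    exact (hle i₀ hi₀D).lt_of_ne fun h => hi₀D (sub_right_injective h)
  · nth_rw 1 [hi₁]
    exact (hle i₁ (hi₁ ▸ hi₁')).lt_of_ne fun h =>
      hi₀₁ (hn (sub_left_injective (h.trans (congrArg (n i₁ - ·) hi₁))))

theorem exists_perm_forall_comp_eq_of_permExponent_eq [DecidableEq ι] [AddGroup G] [LinearOrder G]
    {n : ι → G} (hn : Function.Injective n) (κ : ι → G) :
    ∃ τ : Perm ι, ∀ σ, permExponent n κ σ = permExponent n κ τ → κ ∘ σ = κ ∘ τ := by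
  obtain ⟨τ, -, hτ⟩ := exists_max_image univ (fun τ => toLex (permExponent n κ τ)) univ_nonempty
  refine ⟨τ, fun σ hσ => ?_⟩
  by_contra hne
  obtain ⟨τ', hτ'⟩ := exists_toLex_permExponent_lt hn hσ hne
  exact (hτ τ' (mem_univ τ')).not_gt hτ'

open MvPolynomial in
theorem coeff_permExponent_det {K : Type*} [CommRing K] [DecidableEq ι] [DecidableEq G] [Sub G]
    (a : Matrix ι ι K) (n κ : ι → G) (τ : Perm ι)
    (hτ : ∀ σ, permExponent n κ σ = permExponent n κ τ → κ ∘ σ = κ ∘ τ) :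
    coeff (permExponent n κ τ) (det (of fun i j => X (n i - κ j) * C (a i j)))
      = det (of fun i j => if κ j = κ (τ i) then a i j else 0) := by
  rw [← det_transpose, det_apply', ← det_transpose, det_apply', coeff_sum]
  refine sum_congr rfl fun σ _ => ?_
  have hterm : ∏ i, (of fun i j => X (n i - κ j) * C (a i j))ᵀ (σ i) i
      = monomial (permExponent n κ σ) (∏ i, a i (σ i)) := by
    simp only [transpose_apply, of_apply, permExponent, monomial_sum_prod]
    refine prod_congr rfl fun i _ => ?_
    rw [X, mul_comm, C_mul_monomial, mul_one]
  rw [hterm, ← map_intCast (C : K →+* MvPolynomial G K), coeff_C_mul, coeff_monomial]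
  simp only [transpose_apply, of_apply]
  by_cases hσ : κ ∘ σ = κ ∘ τ
  · have hστ : ∀ i, κ (σ i) = κ (τ i) := congrFun hσ
    simp only [permExponent, hστ, if_true]
  · rw [if_neg (mt (hτ σ) hσ)]
    obtain ⟨i, hi⟩ := Function.ne_iff.1 hσ
    rw [prod_eq_zero (mem_univ i) (if_neg hi), mul_zero]

theorem det_ite_comp_perm_ne_zero {K α : Type*} [CommRing K] [IsDomain K] [DecidableEq ι]
    [LinearOrder α] (a : Matrix ι ι K) (κ : ι → α) (τ : Perm ι)
    (ha : ∀ b, det (of fun j j' : {j // κ j = b} => a (τ.symm j) j') ≠ 0) :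
    det (of fun i j => if κ j = κ (τ i) then a i j else 0) ≠ 0 := by
  set Z : Matrix ι ι K := of fun i j => if κ j = κ (τ i) then a i j else 0
  have hZ : BlockTriangular (Z.submatrix τ.symm id) κ := fun j j' h => by
    simp [Z, h.ne]
  have hdet := det_permute τ.symm Z
  rw [hZ.det] at hdet
  intro h0
  rw [h0, mul_zero] at hdet
  obtain ⟨b, -, hb⟩ := prod_eq_zero_iff.1 hdet
  refine ha b (Eq.trans ?_ hb)
  congr 1
  ext j j'
  simp [Z, toSquareBlock_def, j.2, j'.2]

open MvPolynomial in
theorem det_X_sub_mul_C_ne_zero {K : Type*} [CommRing K] [IsDomain K] [DecidableEq ι]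
    [AddGroup G] [LinearOrder G] {n : ι → G} (hn : Function.Injective n) (κ : ι → G)
    (a : Matrix ι ι K) (ha : ∀ b (e : {j // κ j = b} → ι), Function.Injective e →
      det (of fun j j' : {j // κ j = b} => a (e j) j') ≠ 0) :
    det (of fun i j => X (n i - κ j) * C (a i j) : Matrix ι ι (MvPolynomial G K)) ≠ 0 := by
  obtain ⟨τ, hτ⟩ := exists_perm_forall_comp_eq_of_permExponent_eq hn κ
  intro h
  have hcoeff := coeff_permExponent_det a n κ τ hτ
  rw [h, coeff_zero] at hcoeff
  exact det_ite_comp_perm_ne_zero a κ τ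
    (fun b => ha b _ (τ.symm.injective.comp Subtype.val_injective)) hcoeff.symm

end PermExponent

theorem MvPolynomial.dense_setOf_eval_ne_zero {𝕜 σ : Type*} [RCLike 𝕜] [Fintype σ]
    {p : MvPolynomial σ 𝕜} (hp : p ≠ 0) : Dense {x | eval x p ≠ 0} := by
  rw [dense_iff_inter_open]
  rintro U hU ⟨x, hx⟩
  by_contra! hUp
  refine hp (MvPolynomial.funext fun y => ?_)
  have hzero : (fun y => eval y p) =ᶠ[nhds x] 0 :=
    Filter.mem_of_superset (hU.mem_nhds hx) fun z hz => by
      by_contra h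
      exact hUp.subset ⟨hz, h⟩
  rw [map_zero]
  exact (AnalyticOnNhd.eval_mvPolynomial p).eqOn_zero_of_preconnected_of_eventuallyEq_zero
    isPreconnected_univ (Set.mem_univ x) hzero (Set.mem_univ y)

section Gabor

open MvPolynomial Complex

theorem det_exp_mul_ne_zero {P : ℕ} (hP : P.Prime) {ι : Type*} [Fintype ι] [DecidableEq ι]
    {x y : ι → Fin P} (hx : Function.Injective x) (hy : Function.Injective y) :
    det (of fun i j => exp (2 * Real.pi * I * (x i : ℕ) * (y j : ℕ) / P)) ≠ 0 := by
  let e := (Fintype.equivFin ι).symm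
  rw [← det_submatrix_equiv_self e]
  have hexp : ∀ i j, exp (2 * Real.pi * I * (x i : ℕ) * (y j : ℕ) / P)
      = exp (2 * Real.pi * I / P) ^ ((x i : ℕ) * (y j : ℕ)) := by
    intro i j
    rw [← exp_nat_mul]
    push_cast
    ring_nf
  simp only [submatrix, of_apply, hexp]
  exact (isPrimitiveRoot_exp P hP.ne_zero).det_pow_mul_ne_zero hP
    (Fin.val_injective.comp (hx.comp e.injective)) (Fin.val_injective.comp (hy.comp e.injective))
    (fun i => (x (e i)).isLt) fun j => (y (e j)).isLt

noncomputable def gaborMinorPoly (P : ℕ) {k : ℕ} (r : Fin k → Fin P)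
    (col : Fin k → Fin P × Fin P) : MvPolynomial (Fin P) ℂ :=
  det (of fun i j => X (r i - (col j).1)
    * C (exp (2 * Real.pi * I * (r i : ℕ) * ((col j).2 : ℕ) / P)))

theorem eval_gaborMinorPoly (P : ℕ) {k : ℕ} (r : Fin k → Fin P)
    (col : Fin k → Fin P × Fin P) (c : Fin P → ℂ) :
    eval c (gaborMinorPoly P r col) = det (fun i j => gaborMatrix P c (r i) (col j)) := by
  rw [gaborMinorPoly, RingHom.map_det]
  congr 1
  ext i j
  simp [gaborMatrix]

theorem gaborMinorPoly_ne_zero {P : ℕ} (hP : P.Prime) {k : ℕ} {r : Fin k → Fin P}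
    {col : Fin k → Fin P × Fin P} (hr : Function.Injective r) (hcol : Function.Injective col) :
    gaborMinorPoly P r col ≠ 0 := by
  have : NeZero P := ⟨hP.ne_zero⟩
  refine det_X_sub_mul_C_ne_zero hr (fun j => (col j).1) (of fun i j => _) fun b e he => ?_
  refine det_exp_mul_ne_zero hP (hr.comp he) fun j j' h => Subtype.ext (hcol ?_)
  exact Prod.ext (j.2.trans j'.2.symm) h

end Gabor

open MvPolynomial in
/-- For `P` prime, there is a dense open subset of `c ∈ ℂ^P` such that
every minor of `G(c)` is nonzero; in particular `G(c)` has full Spark (every `P`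
columns are linearly independent) for such `c`. -/
theorem gabor_full_spark_prime (P : ℕ) (hP : P.Prime) :
    ∃ U : Set (Fin P → ℂ), IsOpen U ∧ Dense U ∧ ∀ c ∈ U,
      (∀ (k : ℕ) (r : Fin k → Fin P) (col : Fin k → Fin P × Fin P),
        Function.Injective r → Function.Injective col →
        Matrix.det (fun i j => gaborMatrix P c (r i) (col j)) ≠ 0) ∧
      (∀ s : Finset (Fin P × Fin P), s.card = P →
        LinearIndependent ℂ (fun j : s => fun i => gaborMatrix P c i j)) := by
  let F : MvPolynomial (Fin P) ℂ :=
    ∏ x : Σ k : Fin (P + 1), (Fin k ↪ Fin P) × (Fin k ↪ Fin P × Fin P),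
      gaborMinorPoly P x.2.1 x.2.2
  have hF : F ≠ 0 := prod_ne_zero_iff.2 fun x _ =>
    gaborMinorPoly_ne_zero hP x.2.1.injective x.2.2.injective
  have hminor : ∀ c, eval c F ≠ 0 → ∀ (k : ℕ) (r : Fin k → Fin P) (col : Fin k → Fin P × Fin P),
      Function.Injective r → Function.Injective col →
      Matrix.det (fun i j => gaborMatrix P c (r i) (col j)) ≠ 0 := by
    intro c hc k r col hr hcol
    have hk : k < P + 1 := Nat.lt_succ_of_le (by simpa using Fintype.card_le_of_injective r hr)
    rw [map_prod, prod_ne_zero_iff] at hc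
    rw [← eval_gaborMinorPoly]
    exact hc ⟨⟨k, hk⟩, ⟨r, hr⟩, ⟨col, hcol⟩⟩ (mem_univ _)
  refine ⟨{c | eval c F ≠ 0}, isOpen_ne_fun (continuous_eval F) continuous_const,
    dense_setOf_eval_ne_zero hF, fun c hc => ⟨hminor c hc, fun s hs => ?_⟩⟩
  let e : Fin P ≃ s := (s.equivFin.trans (finCongr hs)).symm
  exact (linearIndependent_equiv e).1 <| linearIndependent_cols_of_det_ne_zero <|
    hminor c hc P id (fun m => e m) Function.injective_id (Subtype.val_injective.comp e.injective)
end

section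
/- Let b: {0,…,P−1} → ℝ be a non-decreasing sequence which is constant on each block A_κ of a partition of {0,…,P−1} into consecutive intervals A₀,…,A_{P−1} (some possibly empty), with b_n = κ for n ∈ A_κ. If σ is a permutation of {0,…,P−1} with ∑_n σ(n)·b_n = ∑_n n·b_n, and σ does not map each block A_κ onto itself, then the sequences (σ(n)) and (b_n) are not similarly ordered, i.e., there exist indices m, k with (σ(m)−σ(k))(b_m−b_k) < 0. -/
open Finset

/-- Two downward-closed finsets in a linear order with equal cardinality are equal. -/
lemma downward_closed_eq {α : Type*} [LinearOrder α] (S T : Finset α)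
    (hS : ∀ x y : α, x ≤ y → y ∈ S → x ∈ S)
    (hT : ∀ x y : α, x ≤ y → y ∈ T → x ∈ T)
    (hc : S.card = T.card) : S = T := by
  have hsub : S ⊆ T ∨ T ⊆ S := by
    by_contra h
    push_neg at h
    obtain ⟨h1, h2⟩ := h
    obtain ⟨x, hxS, hxT⟩ := Finset.not_subset.mp h1
    obtain ⟨y, hyT, hyS⟩ := Finset.not_subset.mp h2
    rcases le_total x y with hxy | hyx
    · exact hxT (hT x y hxy hyT)
    · exact hyS (hS y x hyx hxS)
  rcases hsub with h | h
  · exact Finset.eq_of_subset_of_card_le h hc.ge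
  · exact (Finset.eq_of_subset_of_card_le h hc.le).symm

/-- Let `b : Fin P → ℕ` be non-decreasing (so its fibers
`A_κ = {n | b n = κ}` form a partition of `{0,…,P-1}` into consecutive intervals,
some possibly empty, with `b_n = κ` on `A_κ`). If `σ` is a permutation with
`∑ σ(n)·b_n = ∑ n·b_n` and `σ` does not map each block `A_κ` onto itself
(i.e. `b ∘ σ ≠ b`), then `(σ(n))` and `(b_n)` are not similarly ordered: there are
indices `m, k` with `(σ(m) - σ(k))·(b_m - b_k) < 0`. -/
theorem equality_nontrivial_not_similarly_ordered (P : ℕ) (b : Fin P → ℕ)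
    (hb : Monotone b) (hbP : ∀ n, b n < P)
    (σ : Equiv.Perm (Fin P))
    (hsum : ∑ n : Fin P, ((σ n : ℕ) : ℤ) * (b n : ℤ)
          = ∑ n : Fin P, ((n : ℕ) : ℤ) * (b n : ℤ))
    (hnontriv : ∃ n, b (σ n) ≠ b n) :
    ∃ m k : Fin P, (((σ m : ℕ) : ℤ) - ((σ k : ℕ) : ℤ)) * ((b m : ℤ) - (b k : ℤ)) < 0 := by
  by_contra hcon
  push_neg at hcon
  -- From "similarly ordered": if b m < b k then σ m < σ k.
  have key : ∀ m k : Fin P, b m < b k → (σ m : ℕ) < (σ k : ℕ) := by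
    intro m k hmk
    have h0 := hcon m k
    have hne : (σ m : ℕ) ≠ (σ k : ℕ) := by
      intro he
      have hmk' : m = k := σ.injective (Fin.ext he)
      subst hmk'
      exact lt_irrefl _ hmk
    have hbi : (b m : ℤ) < (b k : ℤ) := by exact_mod_cast hmk
    by_contra hle
    push_neg at hle
    have : (σ k : ℕ) < (σ m : ℕ) := lt_of_le_of_ne hle (Ne.symm hne)
    have hsi : ((σ k : ℕ) : ℤ) < ((σ m : ℕ) : ℤ) := by exact_mod_cast this
    nlinarith
  -- σ maps each down-set {n | b n ≤ t} onto itself.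
  have himg : ∀ t : ℕ,
      (univ.filter (fun n : Fin P => b n ≤ t)).image σ
        = univ.filter (fun n : Fin P => b n ≤ t) := by
    intro t
    set S := univ.filter (fun n : Fin P => b n ≤ t) with hSdef
    have hmemS : ∀ n : Fin P, n ∈ S ↔ b n ≤ t := by
      intro n; simp [hSdef]
    apply downward_closed_eq
    · intro x y hxy hy
      rcases Finset.mem_image.mp hy with ⟨m, hmS, hm⟩
      by_contra hx
      have hxmem : σ.symm x ∉ S := by
        intro h
        exact hx (Finset.mem_image.mpr ⟨σ.symm x, h, σ.apply_symm_apply x⟩)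
      have hbm : b m ≤ t := (hmemS m).mp hmS
      have hbk : t < b (σ.symm x) := lt_of_not_ge (fun h => hxmem ((hmemS _).mpr h))
      have := key m (σ.symm x) (lt_of_le_of_lt hbm hbk)
      rw [hm, σ.apply_symm_apply] at this
      exact absurd (Fin.lt_iff_val_lt_val.mpr this) (not_lt.mpr hxy)
    · intro x y hxy hy
      exact (hmemS x).mpr (le_trans (hb hxy) ((hmemS y).mp hy))
    · exact Finset.card_image_of_injective _ σ.injective
  -- Hence b (σ n) ≤ t ↔ b n ≤ t for all t, so b ∘ σ = b.
  have hiff : ∀ (n : Fin P) (t : ℕ), b (σ n) ≤ t ↔ b n ≤ t := by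
    intro n t
    have h := himg t
    constructor
    · intro hle
      have hmem : σ n ∈ (univ.filter (fun n : Fin P => b n ≤ t)).image σ := by
        rw [h]; simp [hle]
      rcases Finset.mem_image.mp hmem with ⟨m, hmS, hm⟩
      have : m = n := σ.injective hm
      subst this
      simpa using hmS
    · intro hle
      have hmem : σ n ∈ (univ.filter (fun n : Fin P => b n ≤ t)).image σ :=
        Finset.mem_image.mpr ⟨n, by simp [hle], rfl⟩
      rw [h] at hmem
      simpa using hmem
  obtain ⟨n, hn⟩ := hnontriv
  exact hn (le_antisymm ((hiff n (b n)).mpr le_rfl) ((hiff n (b (σ n))).mp le_rfl))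
end

section
/- Let ℓ₀,…,ℓ_{P−1} be nonnegative integers summing to P, and choose γ ∈ {0,…,P−1} minimizing ∑_{i=0}^{γ−1} ℓ_i − γ. Define ℓ'_i = ℓ_{(i+γ) mod P}. Then for every κ ∈ {0,…,P−1}, ∑_{i=0}^{κ−1} ℓ'_i ≥ κ. -/
open Finset

/-- Let `ℓ₀,…,ℓ_{P-1}` be nonnegative integers (extended `P`-periodically)
summing to `P`, and let `γ ∈ {0,…,P-1}` minimize `g(γ) = ∑_{i<γ} ℓ_i − γ`. Then the
cyclic shift `ℓ'_i = ℓ_{(i+γ) mod P}` satisfies `∑_{i<κ} ℓ'_i ≥ κ` for all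
`κ ∈ {0,…,P-1}`. -/
theorem cyclic_shift_partial_sums (P : ℕ) (ℓ : ℕ → ℕ)
    (hper : ∀ i, ℓ (i + P) = ℓ i)
    (hsum : ∑ i ∈ Finset.range P, ℓ i = P)
    (γ : ℕ) (hγ : γ < P)
    (hmin : ∀ γ' < P,
      (∑ i ∈ Finset.range γ, (ℓ i : ℤ)) - (γ : ℤ)
        ≤ (∑ i ∈ Finset.range γ', (ℓ i : ℤ)) - (γ' : ℤ)) :
    ∀ κ < P, (κ : ℤ) ≤ ∑ i ∈ Finset.range κ, (ℓ (i + γ) : ℤ) := by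
  intro κ hκ
  have hP : 0 < P := lt_of_le_of_lt (Nat.zero_le _) hγ
  have hsumZ : (∑ i ∈ Finset.range P, (ℓ i : ℤ)) = P := by exact_mod_cast hsum
  have key : (∑ i ∈ Finset.range (γ + κ), (ℓ i : ℤ))
      = (∑ i ∈ Finset.range γ, (ℓ i : ℤ)) + ∑ i ∈ Finset.range κ, (ℓ (i + γ) : ℤ) := by
    rw [Finset.sum_range_add]
    congr 1
    refine Finset.sum_congr rfl fun i _ => ?_
    rw [add_comm]
  rcases lt_trichotomy (γ + κ) P with h | h | h
  · have hm := hmin (γ + κ) h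
    rw [key] at hm
    push_cast at hm ⊢
    linarith
  · have h0 := hmin 0 hP
    simp at h0
    rw [h, hsumZ] at key
    have hz : (γ : ℤ) + κ = P := by exact_mod_cast h
    linarith
  · have hrP : γ + κ = P + (γ + κ - P) := by omega
    have hkey2 : (∑ i ∈ Finset.range (P + (γ + κ - P)), (ℓ i : ℤ))
        = (P : ℤ) + ∑ i ∈ Finset.range (γ + κ - P), (ℓ i : ℤ) := by
      rw [Finset.sum_range_add, hsumZ]
      congr 1
      refine Finset.sum_congr rfl fun i _ => ?_
      congr 1
      rw [add_comm]
      exact hper i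
    have hrlt : γ + κ - P < P := by omega
    have hm := hmin (γ + κ - P) hrlt
    rw [hrP, hkey2] at key
    have hz : ((γ + κ - P : ℕ) : ℤ) = (γ : ℤ) + κ - P := by
      push_cast [Nat.cast_sub (le_of_lt h)]
      ring
    rw [hz] at hm
    linarith
end

section
/- Let M = (m_{j',j})_{j',j ∈ ℤ²} be a bi-infinite matrix. Suppose there exist a monotonically decreasing function w: [0,∞) → [0,∞) with w(x) = O(x^{−2−δ}) for some δ > 0, and constants λ > 1 and K₀ > 0 such that |m_{j',j}| ≤ w(‖λj' − j‖_∞) whenever ‖λj' − j‖_∞ > K₀. Then M, viewed as an operator from finitely supported sequences in ℓ²(ℤ²) to ℓ²(ℤ²), is not bounded below: there is no constant c > 0 with ‖Mσ‖₂ ≥ c‖σ‖₂ for all finitely supported σ. -/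
/-!
Suppose `‖Mσ‖ ≥ c ‖σ‖`. Fix `N` and the box `B = [0, N)²` of columns. The rows `j'` with
`λ j'` within sup-distance `R = (λ - 1) N / 4` of `B` form a box of side less than `N`, because
multiplication by `λ > 1` spreads the rows out; so some `σ ≠ 0` supported on `B` is annihilated by
all of them. Every remaining entry `m j' j` with `j ∈ B` has `‖λ j' - j‖_∞ > R`, so by the decay of
`w` and Cauchy–Schwarz, `‖Mσ‖² ≤ N² · O(R^{-2-δ}) ‖σ‖² = O(N^{-δ}) ‖σ‖²`, which contradicts
stability once `N` is large.
-/

open Filter Finset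
open scoped NNReal ENNReal Topology

theorem exists_finsupp_ne_zero_forall_sum_eq_zero {K ι ι' : Type*} [Field K]
    (m : ι' → ι → K) {B : Finset ι} {S : Finset ι'} (h : #S < #B) :
    ∃ σ : ι →₀ K, σ ≠ 0 ∧ σ.support ⊆ B ∧
      ∀ j' ∈ S, ∑ j ∈ σ.support, m j' j * σ j = 0 := by
  have hdep : ¬ LinearIndepOn K (fun j (j' : S) => m j' j) (B : Set ι) := fun hind => by
    have := hind.fintype_card_le_finrank
    simp only [Module.finrank_fintype_fun_eq_card, Finset.coe_sort_coe, Fintype.card_coe] at this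
    omega
  obtain ⟨σ, hσB, hσ, hσ0⟩ := linearDepOn_iff'.mp hdep
  refine ⟨σ, hσ0, coe_subset.mp hσB, fun j' hj' => ?_⟩
  simpa [Finsupp.linearCombination_apply, Finsupp.sum, mul_comm] using congrFun hσ ⟨j', hj'⟩

theorem tsum_enorm_sum_mul_sq_le {𝕜 ι ι' : Type*} [SeminormedRing 𝕜]
    (m : ι' → ι → 𝕜) (σ : ι →₀ 𝕜) (S : Set ι') {ε : ℝ≥0∞}
    (hS : ∀ j' ∈ S, ∑ j ∈ σ.support, m j' j * σ j = 0)
    (hε : ∀ j ∈ σ.support, ∑' j', Sᶜ.indicator (fun j' => ‖m j' j‖ₑ ^ 2) j' ≤ ε) :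
    ∑' j', ‖∑ j ∈ σ.support, m j' j * σ j‖ₑ ^ 2
      ≤ #σ.support * ε * ∑ j ∈ σ.support, ‖σ j‖ₑ ^ 2 := by
  have hrow : ∀ j', ‖∑ j ∈ σ.support, m j' j * σ j‖ₑ ^ 2
      ≤ (∑ j ∈ σ.support, Sᶜ.indicator (fun j' => ‖m j' j‖ₑ ^ 2) j') *
        ∑ j ∈ σ.support, ‖σ j‖ₑ ^ 2 := fun j' => by
    by_cases hj' : j' ∈ S
    · simp [hS j' hj', enorm_eq_nnnorm]
    have hCS : ‖∑ j ∈ σ.support, m j' j * σ j‖₊ ^ 2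
        ≤ (∑ j ∈ σ.support, ‖m j' j‖₊ ^ 2) * ∑ j ∈ σ.support, ‖σ j‖₊ ^ 2 :=
      calc _ ≤ (∑ j ∈ σ.support, ‖m j' j‖₊ * ‖σ j‖₊) ^ 2 := by
            gcongr
            exact (nnnorm_sum_le _ _).trans (sum_le_sum fun j _ => nnnorm_mul_le _ _)
        _ ≤ _ := sum_mul_sq_le_sq_mul_sq _ _ _
    have := ENNReal.coe_le_coe.mpr hCS
    push_cast at this
    simpa [hj', enorm_eq_nnnorm] using this
  calc ∑' j', ‖∑ j ∈ σ.support, m j' j * σ j‖ₑ ^ 2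
      ≤ (∑ j ∈ σ.support, ∑' j', Sᶜ.indicator (fun j' => ‖m j' j‖ₑ ^ 2) j') *
          ∑ j ∈ σ.support, ‖σ j‖ₑ ^ 2 := by
        rw [← Summable.tsum_finsetSum fun _ _ => ENNReal.summable, ← ENNReal.tsum_mul_right]
        exact ENNReal.tsum_le_tsum hrow
    _ ≤ (∑ _j ∈ σ.support, ε) * ∑ j ∈ σ.support, ‖σ j‖ₑ ^ 2 := by gcongr with j hj; exact hε j hj
    _ = #σ.support * ε * ∑ j ∈ σ.support, ‖σ j‖ₑ ^ 2 := by rw [sum_const, nsmul_eq_mul]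

theorem exists_forall_lt_norm_le_mul_rpow {ι ι' E : Type*} [SeminormedAddCommGroup E]
    {m : ι' → ι → E} {d : ι' → ι → ℝ} {w : ℝ → ℝ} {r K₀ : ℝ}
    (hwO : w =O[atTop] fun x => x ^ r) (hm : ∀ j' j, K₀ < d j' j → ‖m j' j‖ ≤ w (d j' j)) :
    ∃ C R₀, ∀ j' j, R₀ < d j' j → ‖m j' j‖ ≤ C * d j' j ^ r := by
  obtain ⟨C, hC⟩ := Asymptotics.isBigO_iff.mp hwO
  obtain ⟨x₀, hx₀⟩ := eventually_atTop.mp hC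
  refine ⟨C, max (max K₀ x₀) 0, fun j' j hj => ?_⟩
  simp only [max_lt_iff] at hj
  calc ‖m j' j‖ ≤ w (d j' j) := hm j' j hj.1.1
    _ ≤ ‖w (d j' j)‖ := Real.le_norm_self _
    _ ≤ C * ‖d j' j ^ r‖ := hx₀ _ hj.1.2.le
    _ = C * d j' j ^ r := by rw [Real.norm_of_nonneg (Real.rpow_nonneg hj.2.le r)]

theorem summable_max_abs_int_rpow_neg {p : ℝ} (hp : 1 < p) :
    Summable fun k : ℤ => max |(k : ℝ)| 1 ^ (-p) := by
  refine (Real.summable_abs_int_rpow hp).of_norm_bounded_eventually ?_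
  filter_upwards [(Set.finite_singleton (0 : ℤ)).compl_mem_cofinite] with k hk
  have hk1 : 1 ≤ |(k : ℝ)| := by exact_mod_cast Int.one_le_abs hk
  rw [max_eq_left hk1, Real.norm_of_nonneg (by positivity)]

theorem max_abs_int_le_two_mul_max_abs_sub (k : ℤ) {s : ℝ} (hs : |s| ≤ 1 / 2) :
    max |(k : ℝ)| 1 ≤ 2 * max |k - s| 1 := by
  rcases eq_or_ne k 0 with rfl | hk
  · rw [Int.cast_zero, abs_zero, max_eq_right zero_le_one]
    linarith [le_max_right |(0 : ℝ) - s| 1]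
  · have hk1 : 1 ≤ |(k : ℝ)| := by exact_mod_cast Int.one_le_abs hk
    have := abs_sub_abs_le_abs_sub (k : ℝ) s
    exact max_le (by linarith [le_max_left |(k : ℝ) - s| 1])
      (by linarith [le_max_right |(k : ℝ) - s| 1])

theorem exists_tsum_ofReal_max_abs_sub_rpow_le {p : ℝ} (hp : 1 < p) :
    ∃ D : ℝ≥0, ∀ t : ℝ, ∑' a : ℤ, ENNReal.ofReal (max |a - t| 1 ^ (-p)) ≤ D := by
  set g : ℤ → ℝ := fun k => 2 ^ p * max |(k : ℝ)| 1 ^ (-p)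
  have hg : Summable g := (summable_max_abs_int_rpow_neg hp).mul_left _
  refine ⟨(∑' k, g k).toNNReal, fun t => ?_⟩
  -- shifting by `round t` reduces to `|t| ≤ 1/2`
  have hpoint : ∀ a : ℤ, max |a - t| 1 ^ (-p) ≤ g (a - round t) := fun a => by
    have hmax := max_abs_int_le_two_mul_max_abs_sub (a - round t) (abs_sub_round t)
    rw [show ((a - round t : ℤ) : ℝ) - (t - round t) = a - t by push_cast; ring] at hmax
    calc max |a - t| 1 ^ (-p) ≤ (2⁻¹ * max |((a - round t : ℤ) : ℝ)| 1) ^ (-p) :=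
          Real.rpow_le_rpow_of_nonpos (by positivity) (by linarith) (by linarith)
      _ = g (a - round t) := by
          rw [Real.mul_rpow (by norm_num) (by positivity), Real.inv_rpow (by norm_num),
            Real.rpow_neg (by norm_num : (0 : ℝ) ≤ 2), inv_inv]
  calc ∑' a : ℤ, ENNReal.ofReal (max |a - t| 1 ^ (-p))
      ≤ ∑' a : ℤ, ENNReal.ofReal (g (a - round t)) :=
        ENNReal.tsum_le_tsum fun a => ENNReal.ofReal_le_ofReal (hpoint a)
    _ = ∑' k : ℤ, ENNReal.ofReal (g k) :=
        (Equiv.subRight (round t)).tsum_eq fun k => ENNReal.ofReal (g k)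
    _ = ENNReal.ofReal (∑' k, g k) :=
        (ENNReal.ofReal_tsum_of_nonneg (fun k => by positivity) hg).symm

/-- The squared decay `d^{-2(2+δ)}` splits into a small factor `R^{-(2+δ)}` and a product of two
one-dimensional weights that are summable over `ℤ`. -/
theorem rpow_neg_two_mul_sq_le {q R u v s t : ℝ} (hq : 0 ≤ q) (hR : 1 ≤ R)
    (hRuv : R ≤ max u v) (hs : s ≤ u) (ht : t ≤ v) :
    (max u v ^ (-(2 * q))) ^ 2 ≤ R ^ (-(2 * q)) * (max s 1 ^ (-q) * max t 1 ^ (-q)) := by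
  set M := max u v
  have hM : 0 < M := by linarith
  have hst : max s 1 * max t 1 ≤ M * M :=
    mul_le_mul (max_le (hs.trans (le_max_left u v)) (hR.trans hRuv))
      (max_le (ht.trans (le_max_right u v)) (hR.trans hRuv)) (by positivity) hM.le
  rw [sq, ← Real.mul_rpow (x := max s 1) (by positivity) (by positivity)]
  refine mul_le_mul ?_ ?_ (by positivity) (by positivity)
  · exact Real.rpow_le_rpow_of_nonpos (by linarith) hRuv (by linarith)
  · calc M ^ (-(2 * q)) = (M * M) ^ (-q) := by
          rw [Real.mul_rpow hM.le hM.le, ← Real.rpow_add hM]; ring_nf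
      _ ≤ (max s 1 * max t 1) ^ (-q) :=
          Real.rpow_le_rpow_of_nonpos (by positivity) hst (by linarith)

theorem abs_sub_div_le_abs_mul_sub {lam : ℝ} (hlam : 1 ≤ lam) (a x : ℝ) :
    |a - x / lam| ≤ |lam * a - x| := by
  rw [show lam * a - x = lam * (a - x / lam) by field_simp, abs_mul,
    abs_of_pos (by linarith : 0 < lam)]
  exact le_mul_of_one_le_left (abs_nonneg _) hlam

def slantDist (lam : ℝ) (j' j : ℤ × ℤ) : ℝ :=
  max |lam * j'.1 - j.1| |lam * j'.2 - j.2|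

theorem tsum_indicator_lt_slantDist_enorm_sq_le {E : Type*} [SeminormedAddCommGroup E]
    {m : ℤ × ℤ → ℤ × ℤ → E} {lam δ C R : ℝ} {D : ℝ≥0} (hlam : 1 ≤ lam) (hδ : 0 ≤ δ)
    (hR : 1 ≤ R) (hD : ∀ t : ℝ, ∑' a : ℤ, ENNReal.ofReal (max |a - t| 1 ^ (-(1 + δ / 2))) ≤ D)
    (hm : ∀ j' j, R < slantDist lam j' j → ‖m j' j‖ ≤ C * slantDist lam j' j ^ (-2 - δ))
    (j : ℤ × ℤ) :
    ∑' j', {j' | R < slantDist lam j' j}.indicator (fun j' => ‖m j' j‖ₑ ^ 2) j'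
      ≤ ENNReal.ofReal (C ^ 2 * D ^ 2 * R ^ (-(2 + δ))) := by
  set g : ℤ → ℝ → ℝ≥0∞ := fun a t => ENNReal.ofReal (max |a - t| 1 ^ (-(1 + δ / 2)))
  have hpoint : ∀ j', {j' | R < slantDist lam j' j}.indicator (fun j' => ‖m j' j‖ₑ ^ 2) j'
      ≤ ENNReal.ofReal (C ^ 2 * R ^ (-(2 + δ))) * (g j'.1 (j.1 / lam) * g j'.2 (j.2 / lam)) := by
    intro j'
    by_cases hj' : R < slantDist lam j' j
    · rw [Set.indicator_of_mem (s := {j' | R < slantDist lam j' j}) hj',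
        ← ENNReal.ofReal_mul (by positivity), ← ENNReal.ofReal_mul (by positivity), ← ofReal_norm,
        ← ENNReal.ofReal_pow (norm_nonneg _)]
      refine ENNReal.ofReal_le_ofReal ?_
      have hsq := pow_le_pow_left₀ (norm_nonneg _) (hm j' j hj') 2
      have hrpow := rpow_neg_two_mul_sq_le (q := 1 + δ / 2) (by linarith) hR hj'.le
        (abs_sub_div_le_abs_mul_sub hlam _ _) (abs_sub_div_le_abs_mul_sub hlam _ _)
      rw [show -(2 * (1 + δ / 2)) = -(2 + δ) by ring] at hrpow
      rw [show -2 - δ = -(2 + δ) by ring, mul_pow] at hsq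
      exact (hsq.trans (mul_le_mul_of_nonneg_left hrpow (sq_nonneg C))).trans_eq
        (mul_assoc _ _ _).symm
    · simp [Set.indicator_of_notMem, hj']
  calc _ ≤ ∑' j' : ℤ × ℤ, ENNReal.ofReal (C ^ 2 * R ^ (-(2 + δ))) *
          (g j'.1 (j.1 / lam) * g j'.2 (j.2 / lam)) := ENNReal.tsum_le_tsum hpoint
    _ = ENNReal.ofReal (C ^ 2 * R ^ (-(2 + δ))) *
          ((∑' a, g a (j.1 / lam)) * ∑' b, g b (j.2 / lam)) := by
        rw [ENNReal.tsum_mul_left, ENNReal.tsum_prod', ← ENNReal.tsum_mul_right]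
        simp_rw [ENNReal.tsum_mul_left]
    _ ≤ ENNReal.ofReal (C ^ 2 * R ^ (-(2 + δ))) * (D * D) := by gcongr <;> apply hD
    _ = _ := by
        rw [mul_right_comm, ENNReal.ofReal_mul (p := C ^ 2 * R ^ (-(2 + δ))) (by positivity),
          ← NNReal.coe_pow, ENNReal.ofReal_coe_nnreal, ENNReal.coe_pow, ← sq]

theorem exists_card_lt_forall_lt_abs_mul_sub {lam R : ℝ} {N : ℕ} (hlam : 0 < lam) (hN : 0 < N)
    (hRN : 2 * R < (lam - 1) * (N - 1)) :
    ∃ I : Finset ℤ, #I < N ∧ ∀ a ∉ I, ∀ x ∈ Icc (0 : ℤ) (N - 1), R < |lam * a - x| := by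
  refine ⟨Icc ⌈-R / lam⌉ ⌊(N - 1 + R) / lam⌋, ?_, fun a ha x hx => ?_⟩
  · have hlen : (⌊(N - 1 + R) / lam⌋ + 1 - ⌈-R / lam⌉ : ℝ) < N := by
      have : (N - 1 + R) / lam - -R / lam < N - 1 := by
        rw [← sub_div, div_lt_iff₀ hlam]; linarith
      linarith [Int.floor_le ((N - 1 + R) / lam), Int.le_ceil (-R / lam)]
    have : ⌊(N - 1 + R) / lam⌋ + 1 - ⌈-R / lam⌉ < N := by exact_mod_cast hlen
    rw [Int.card_Icc]
    omega
  · have hx : (0 : ℝ) ≤ x ∧ (x : ℝ) ≤ N - 1 := by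
      rw [mem_Icc] at hx; exact ⟨by exact_mod_cast hx.1, by exact_mod_cast hx.2⟩
    rw [mem_Icc, not_and_or, not_le, not_le, Int.lt_ceil, Int.floor_lt] at ha
    rcases ha with ha | ha
    · rw [lt_div_iff₀ hlam] at ha
      linarith [neg_abs_le (lam * a - x)]
    · rw [div_lt_iff₀ hlam] at ha
      linarith [le_abs_self (lam * a - x)]

theorem exists_ne_zero_tsum_enorm_sq_le_natCast_sq_mul {𝕜 : Type*} [NormedField 𝕜]
    {m : ℤ × ℤ → ℤ × ℤ → 𝕜} {lam R : ℝ} {N : ℕ} {ε : ℝ≥0∞} (hlam : 0 < lam) (hN : 0 < N)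
    (hRN : 2 * R < (lam - 1) * (N - 1))
    (hcol : ∀ j, ∑' j', {j' | R < slantDist lam j' j}.indicator (fun j' => ‖m j' j‖ₑ ^ 2) j' ≤ ε) :
    ∃ σ : (ℤ × ℤ) →₀ 𝕜, σ ≠ 0 ∧ ∑' j', ‖∑ j ∈ σ.support, m j' j * σ j‖ₑ ^ 2
      ≤ N ^ 2 * ε * ∑ j ∈ σ.support, ‖σ j‖ₑ ^ 2 := by
  obtain ⟨I, hIN, hfar⟩ := exists_card_lt_forall_lt_abs_mul_sub hlam hN hRN
  set B := Icc (0 : ℤ) (N - 1) ×ˢ Icc (0 : ℤ) (N - 1)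
  have hB : #B = N ^ 2 := by simp [B, sq]
  have hIB : #(I ×ˢ I) < #B := by
    rw [hB, card_product, ← sq]; exact Nat.pow_lt_pow_left hIN two_ne_zero
  obtain ⟨σ, hσ, hσB, hσI⟩ := exists_finsupp_ne_zero_forall_sum_eq_zero m hIB
  have hSc : ∀ j ∈ σ.support, ((I ×ˢ I : Finset (ℤ × ℤ)) : Set (ℤ × ℤ))ᶜ ⊆
      {j' | R < slantDist lam j' j} := fun j hj j' hj' => by
    have hjB := mem_product.mp (hσB hj)
    rcases not_and_or.mp (mt mem_product.mpr hj') with h | h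
    · exact (hfar _ h _ hjB.1).trans_le (le_max_left _ _)
    · exact (hfar _ h _ hjB.2).trans_le (le_max_right _ _)
  refine ⟨σ, hσ, (tsum_enorm_sum_mul_sq_le m σ _ hσI fun j hj =>
    (ENNReal.tsum_le_tsum fun j' => Set.indicator_le_indicator_of_subset (hSc j hj)
      (fun _ => zero_le) j').trans (hcol j)).trans ?_⟩
  gcongr
  exact_mod_cast hB ▸ card_le_card hσB

theorem tendsto_sq_mul_const_mul_rpow_neg_two_add {ρ δ : ℝ} (hρ : 0 < ρ) (hδ : 0 < δ) :
    Tendsto (fun x : ℝ => x ^ 2 * (ρ * x) ^ (-(2 + δ))) atTop (𝓝 0) := by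
  have h := (tendsto_rpow_neg_atTop hδ).const_mul (ρ ^ (-(2 + δ)))
  rw [mul_zero] at h
  refine h.congr' ?_
  filter_upwards [eventually_gt_atTop 0] with x hx
  rw [Real.mul_rpow hρ.le hx.le, ← Real.rpow_natCast, mul_left_comm, ← Real.rpow_add hx]
  norm_num

theorem exists_ne_zero_tsum_enorm_sq_le_ofReal_mul {𝕜 : Type*} [NormedField 𝕜]
    {m : ℤ × ℤ → ℤ × ℤ → 𝕜} {lam δ A R₁ ε : ℝ} (hlam : 1 < lam) (hδ : 0 < δ) (hε : 0 < ε)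
    (hcol : ∀ R, R₁ ≤ R → ∀ j, ∑' j', {j' | R < slantDist lam j' j}.indicator
      (fun j' => ‖m j' j‖ₑ ^ 2) j' ≤ ENNReal.ofReal (A * R ^ (-(2 + δ)))) :
    ∃ σ : (ℤ × ℤ) →₀ 𝕜, σ ≠ 0 ∧ ∑' j', ‖∑ j ∈ σ.support, m j' j * σ j‖ₑ ^ 2
      ≤ ENNReal.ofReal (ε * ∑ j ∈ σ.support, ‖σ j‖ ^ 2) := by
  set ρ := (lam - 1) / 4 with hρ_def
  have hρ : 0 < ρ := by positivity
  obtain ⟨N, hN, hR, hsmall⟩ : ∃ N : ℕ, 3 ≤ N ∧ R₁ ≤ ρ * N ∧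
      (N : ℝ) ^ 2 * (A * (ρ * N) ^ (-(2 + δ))) < ε := by
    have h := ((tendsto_sq_mul_const_mul_rpow_neg_two_add hρ hδ).comp
      tendsto_natCast_atTop_atTop).const_mul A
    rw [mul_zero] at h
    refine ((eventually_ge_atTop 3).and
      (((tendsto_natCast_atTop_atTop.const_mul_atTop hρ).eventually_ge_atTop _).and
        (h.eventually_lt_const hε))).exists.imp fun N hN => ⟨hN.1, hN.2.1, ?_⟩
    simpa only [Function.comp_apply, mul_left_comm] using hN.2.2
  have hRN : 2 * (ρ * N) < (lam - 1) * (N - 1) := by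
    have : (3 : ℝ) ≤ N := by exact_mod_cast hN
    rw [hρ_def]
    nlinarith [mul_pos (sub_pos.mpr hlam) (by linarith : (0 : ℝ) < N - 2)]
  obtain ⟨σ, hσ, hMσ⟩ :=
    exists_ne_zero_tsum_enorm_sq_le_natCast_sq_mul (m := m) (by linarith) (by omega) hRN (hcol _ hR)
  refine ⟨σ, hσ, hMσ.trans ?_⟩
  rw [ENNReal.ofReal_mul hε.le, ENNReal.ofReal_sum_of_nonneg fun _ _ => by positivity,
    ← ENNReal.ofReal_natCast, ← ENNReal.ofReal_pow (by positivity),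
    ← ENNReal.ofReal_mul (by positivity)]
  simp only [ENNReal.ofReal_pow (norm_nonneg _), ofReal_norm]
  gcongr

theorem slanted_matrix_not_stable_general
    (m : ℤ × ℤ → ℤ × ℤ → ℂ)
    (w : ℝ → ℝ)
    (δ : ℝ) (hδ : 0 < δ)
    (hwO : w =O[atTop] fun x : ℝ => x ^ (-2 - δ))
    (lam : ℝ) (hlam : 1 < lam) (K₀ : ℝ)
    (hm : ∀ j' j : ℤ × ℤ,
      K₀ < max |lam * (j'.1 : ℝ) - (j.1 : ℝ)| |lam * (j'.2 : ℝ) - (j.2 : ℝ)| →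
      ‖m j' j‖ ≤ w (max |lam * (j'.1 : ℝ) - (j.1 : ℝ)| |lam * (j'.2 : ℝ) - (j.2 : ℝ)|)) :
    ¬ ∃ c : ℝ, 0 < c ∧ ∀ σ : (ℤ × ℤ) →₀ ℂ,
      ENNReal.ofReal (c ^ 2 * ∑ j ∈ σ.support, ‖σ j‖ ^ 2)
        ≤ ∑' j' : ℤ × ℤ, (‖∑ j ∈ σ.support, m j' j * σ j‖₊ : ENNReal) ^ 2 := by
  rintro ⟨c, hc, hstab⟩
  obtain ⟨C, R₀, hdecay⟩ := exists_forall_lt_norm_le_mul_rpow (d := slantDist lam) hwO hm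
  obtain ⟨D, hD⟩ := exists_tsum_ofReal_max_abs_sub_rpow_le (p := 1 + δ / 2) (by linarith)
  obtain ⟨σ, hσ, hMσ⟩ := exists_ne_zero_tsum_enorm_sq_le_ofReal_mul (m := m) (R₁ := max R₀ 1)
    hlam hδ (half_pos (pow_pos hc 2)) fun R hR j =>
      tsum_indicator_lt_slantDist_enorm_sq_le hlam.le hδ.le (le_of_max_le_right hR) hD
        (fun j' j h => hdecay j' j ((le_of_max_le_left hR).trans_lt h)) j
  have hE : 0 < ∑ j ∈ σ.support, ‖σ j‖ ^ 2 :=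
    sum_pos (fun j hj => pow_pos (norm_pos_iff.mpr (Finsupp.mem_support_iff.mp hj)) 2)
      (Finsupp.support_nonempty_iff.mpr hσ)
  have hle := (ENNReal.ofReal_le_ofReal_iff (by positivity)).mp ((hstab σ).trans hMσ)
  nlinarith [mul_pos (pow_pos hc 2) hE]

/-- A bi-infinite matrix `(m_{j',j})_{j',j∈ℤ²}` whose entries decay like
`|m_{j',j}| ≤ w(‖λj' − j‖_∞)` off a skew diagonal of slope `λ > 1`, where `w` is
monotonically decreasing with `w(x) = O(x^{−2−δ})`, is not stable: there is no `c > 0`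
with `‖Mσ‖_{ℓ²} ≥ c‖σ‖_{ℓ²}` for all finitely supported `σ`. -/
theorem slanted_matrix_not_stable
    (m : ℤ × ℤ → ℤ × ℤ → ℂ)
    (w : ℝ → ℝ) (hw_anti : AntitoneOn w (Set.Ici 0)) (hw_nonneg : ∀ x, 0 ≤ w x)
    (δ : ℝ) (hδ : 0 < δ)
    (hwO : w =O[atTop] fun x : ℝ => x ^ (-2 - δ))
    (lam : ℝ) (hlam : 1 < lam) (K₀ : ℝ) (hK₀ : 0 < K₀)
    (hm : ∀ j' j : ℤ × ℤ,
      K₀ < max |lam * (j'.1 : ℝ) - (j.1 : ℝ)| |lam * (j'.2 : ℝ) - (j.2 : ℝ)| →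
      ‖m j' j‖ ≤ w (max |lam * (j'.1 : ℝ) - (j.1 : ℝ)| |lam * (j'.2 : ℝ) - (j.2 : ℝ)|)) :
    ¬ ∃ c : ℝ, 0 < c ∧ ∀ σ : (ℤ × ℤ) →₀ ℂ,
      ENNReal.ofReal (c ^ 2 * ∑ j ∈ σ.support, ‖σ j‖ ^ 2)
        ≤ ∑' j' : ℤ × ℤ, (‖∑ j ∈ σ.support, m j' j * σ j‖₊ : ENNReal) ^ 2 :=
  slanted_matrix_not_stable_general m w δ hδ hwO lam hlam K₀ hm
end

section
/- Let P ∈ ℕ and let M be a d×d submatrix of the Gabor matrix G(c) described by the vector ℓ = (ℓ₀,…,ℓ_{P−1}) recording the number of columns drawn from each block D_κ W_P (so ∑ℓ_κ = d). Then the number of generalized diagonals of M whose product of entries is a nonzero constant multiple of the lowest-index monomial p_M equals ∏_{κ=0}^{P−1} ℓ_κ!. -/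
open scoped Classical

/-- The lowest-index (LI) monomial of a `d×d` matrix of variables, recorded as a
multiset of variable indices.  `A i j` is the index of the variable `c_{A i j}`
appearing (up to a nonzero constant) in entry `(i,j)`.  Recursively: take the variable
`c_v` of lowest index appearing in the matrix, pick an entry containing it (the
canonical choice: smallest row, then smallest column -- the result is independent of
this choice), delete that row and column, and recurse: `p_M = c_v · p_{M'}`. -/
noncomputable def LImonomial (P : ℕ) [NeZero P] :
    (d : ℕ) → (Fin d → Fin d → Fin P) → Multiset (Fin P)
  | 0, _ => 0
  | d + 1, A =>
    let v : Fin P :=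
      ((Finset.univ.image fun p : Fin (d + 1) × Fin (d + 1) => A p.1 p.2).min).untopD 0
    let i : Fin (d + 1) :=
      ((Finset.univ.filter fun i => ∃ j, A i j = v).min).untopD 0
    let j : Fin (d + 1) :=
      ((Finset.univ.filter fun j => A i j = v).min).untopD 0
    v ::ₘ LImonomial P d (fun i' j' => A (i.succAbove i') (j.succAbove j'))

/-! Write the entries as `A i j = r i - f j` with `f j = (col j).1`. As `r` is injective, each
column takes every value at most once, so the lowest value `v` occurs in `p_M` once for every row
containing it. A diagonal realizing `p_M` therefore meets the pivot row in a `v`-entry, i.e. in a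
column of the same class as the pivot column; since columns of equal class are equal, swapping
the two reroutes the diagonal through the pivot, and induction on the minor shows that all
realizing diagonals assign the same class to every row. They thus form one coset of the group of
class-preserving permutations, which has `∏ ℓ_κ!` elements. -/

open Finset Equiv

lemma Finset.untopD_min_mem {α : Type*} [LinearOrder α] {s : Finset α} (hs : s.Nonempty)
    (a : α) : s.min.untopD a ∈ s := by
  rw [← coe_min' hs, WithTop.untopD_coe]
  exact min'_mem s hs

namespace Equiv.Perm

variable {d : ℕ}

lemma exists_apply_eq_and_succAbove (σ : Perm (Fin d)) (i₀ j₀ : Fin (d + 1)) :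
    ∃ π : Perm (Fin (d + 1)), π j₀ = i₀ ∧ ∀ j, π (j₀.succAbove j) = i₀.succAbove (σ j) :=
  ⟨((finSuccEquiv' j₀).trans σ.optionCongr).trans (finSuccEquiv' i₀).symm, by simp, by simp⟩

lemma exists_succAbove_of_apply_eq {π : Perm (Fin (d + 1))} {i₀ j₀ : Fin (d + 1)}
    (h : π j₀ = i₀) : ∃ σ : Perm (Fin d), ∀ j, π (j₀.succAbove j) = i₀.succAbove (σ j) := by
  set e := ((finSuccEquiv' j₀).symm.trans π).trans (finSuccEquiv' i₀)
  have he : ∀ j, e (some j) = some (e.removeNone j) := fun j =>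
    (Equiv.removeNone_some e (Option.ne_none_iff_exists'.1 fun hj =>
      Option.some_ne_none j (e.injective (hj.trans (by simp [e, h]))))).symm
  refine ⟨e.removeNone, fun j => ?_⟩
  simpa only [e, Equiv.trans_apply, finSuccEquiv'_symm_some, finSuccEquiv'_eq_some] using he j

lemma inv_apply_succAbove {π : Perm (Fin (d + 1))} {σ : Perm (Fin d)} {i₀ j₀ : Fin (d + 1)}
    (hσ : ∀ j, π (j₀.succAbove j) = i₀.succAbove (σ j)) (i : Fin d) :
    π⁻¹ (i₀.succAbove i) = j₀.succAbove (σ⁻¹ i) :=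
  inv_eq_iff_eq.2 (by rw [hσ]; simp)

end Equiv.Perm

namespace LImonomial

section Diag

variable {n α : Type*} [Fintype n]

def diag (A : n → n → α) (π : Perm n) : Multiset α :=
  univ.val.map fun j => A (π j) j

lemma diag_eq_map_inv (A : n → n → α) (π : Perm n) :
    diag A π = univ.val.map fun i => A i (π⁻¹ i) := by
  rw [diag, ← Multiset.map_univ_val_equiv π⁻¹, Multiset.map_map]
  simp

lemma diag_mul_of_comp_eq {β : Type*} {A : n → n → α} {B : n → β → α} {f : n → β}
    (hA : ∀ i j, A i j = B i (f j)) (π : Perm n) {σ : Perm n} (hσ : f ∘ σ = f) :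
    diag A (π * σ) = diag A π := by
  have hσA : ∀ j, A ((π * σ) j) j = A (π (σ j)) (σ j) := fun j => by
    rw [Perm.mul_apply, hA, hA, ← Function.comp_apply (f := f), hσ]
  calc diag A (π * σ) = (univ.val.map σ).map fun j => A (π j) j := by
        rw [diag, Multiset.map_map]
        exact Multiset.map_congr rfl fun j _ => hσA j
    _ = diag A π := by rw [Multiset.map_univ_val_equiv, diag]

lemma diag_eq_cons {d : ℕ} (A : Fin (d + 1) → Fin (d + 1) → α) {π : Perm (Fin (d + 1))}
    {σ : Perm (Fin d)} {i₀ j₀ : Fin (d + 1)} (h₀ : π j₀ = i₀)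
    (hσ : ∀ j, π (j₀.succAbove j) = i₀.succAbove (σ j)) :
    diag A π = A i₀ j₀ ::ₘ diag (fun i j => A (i₀.succAbove i) (j₀.succAbove j)) σ := by
  rw [diag, Fin.univ_succAbove d j₀, cons_val, Multiset.map_cons, h₀, map_val, Multiset.map_map]
  congr 1
  exact Multiset.map_congr rfl fun j _ => by simp [hσ]

end Diag

variable {P : ℕ} [NeZero P]

section Pivot

variable {d : ℕ} (A : Fin (d + 1) → Fin (d + 1) → Fin P)

def pivotVal : Fin P :=
  ((univ.image fun p : Fin (d + 1) × Fin (d + 1) => A p.1 p.2).min).untopD 0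

def pivotRow : Fin (d + 1) :=
  ((univ.filter fun i => ∃ j, A i j = pivotVal A).min).untopD 0

def pivotCol : Fin (d + 1) :=
  ((univ.filter fun j => A (pivotRow A) j = pivotVal A).min).untopD 0

def minor : Fin d → Fin d → Fin P :=
  fun i j => A ((pivotRow A).succAbove i) ((pivotCol A).succAbove j)

lemma LImonomial_succ : LImonomial P (d + 1) A = pivotVal A ::ₘ LImonomial P d (minor A) := rfl

lemma pivotVal_le (i j : Fin (d + 1)) : pivotVal A ≤ A i j :=
  WithTop.untopD_le (min_le (mem_image_of_mem _ (mem_univ (i, j))))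

lemma apply_pivotRow_pivotCol : A (pivotRow A) (pivotCol A) = pivotVal A := by
  have hv := untopD_min_mem (univ_nonempty.image fun p : Fin (d + 1) × Fin (d + 1) => A p.1 p.2) 0
  obtain ⟨p, -, hp⟩ := mem_image.1 hv
  have hi := untopD_min_mem (s := univ.filter fun i => ∃ j, A i j = pivotVal A)
    ⟨p.1, mem_filter.2 ⟨mem_univ _, p.2, hp⟩⟩ 0
  obtain ⟨j, hj⟩ := (mem_filter.1 hi).2
  exact (mem_filter.1 (untopD_min_mem (s := univ.filter fun j => A (pivotRow A) j = pivotVal A)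
    ⟨j, mem_filter.2 ⟨mem_univ _, hj⟩⟩ 0)).2

end Pivot

section ColumnInjective

variable {d : ℕ} {A : Fin (d + 1) → Fin (d + 1) → Fin P}

lemma minor_injective (hA : ∀ j, Function.Injective (A · j)) (j : Fin d) :
    Function.Injective (minor A · j) :=
  fun _ _ h => Fin.succAbove_right_injective (hA _ h)

/-- A row meeting `pivotVal A` in column `pivotCol A` can only be `pivotRow A`. -/
lemma map_filter_minor (hA : ∀ j, Function.Injective (A · j)) :
    (univ.filter fun i => ∃ j, minor A i j = pivotVal A).map (pivotRow A).succAboveEmb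
      = (univ.filter fun i => ∃ j, A i j = pivotVal A).erase (pivotRow A) := by
  ext i
  simp only [mem_map, mem_filter, mem_univ, true_and, mem_erase, Fin.succAboveEmb_apply]
  constructor
  · rintro ⟨i', ⟨j', hj'⟩, rfl⟩
    exact ⟨Fin.succAbove_ne _ _, _, hj'⟩
  · rintro ⟨hi, j, hj⟩
    have hj₀ : j ≠ pivotCol A := by
      rintro rfl
      exact hi (hA _ (hj.trans (apply_pivotRow_pivotCol A).symm))
    obtain ⟨i', rfl⟩ := Fin.exists_succAbove_eq hi
    obtain ⟨j', rfl⟩ := Fin.exists_succAbove_eq hj₀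
    exact ⟨i', ⟨j', hj⟩, rfl⟩

end ColumnInjective

theorem count_LImonomial : ∀ {d : ℕ} (A : Fin d → Fin d → Fin P),
    (∀ j, Function.Injective (A · j)) → ∀ {v : Fin P}, (∀ i j, v ≤ A i j) →
    (LImonomial P d A).count v = (univ.filter fun i => ∃ j, A i j = v).card
  | 0, A, _, v, _ => by simp [LImonomial]
  | d + 1, A, hA, v, hv => by
    have ih := count_LImonomial (minor A) (minor_injective hA) fun i j => hv _ _
    rw [LImonomial_succ]
    by_cases hvA : v = pivotVal A
    · subst hvA
      have hmem : pivotRow A ∈ univ.filter fun i => ∃ j, A i j = pivotVal A :=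
        mem_filter.2 ⟨mem_univ _, _, apply_pivotRow_pivotCol A⟩
      rw [Multiset.count_cons_self, ih, ← card_map, map_filter_minor hA,
        card_erase_add_one hmem]
    · have hne : ∀ i j, A i j ≠ v := fun i j h =>
        hvA (le_antisymm (apply_pivotRow_pivotCol A ▸ hv _ _) (h ▸ pivotVal_le A i j))
      rw [Multiset.count_cons_of_ne hvA, ih, filter_false_of_mem, filter_false_of_mem] <;>
        simp [hne, minor]

lemma apply_inv_pivotRow {d : ℕ} {A : Fin (d + 1) → Fin (d + 1) → Fin P}
    (hA : ∀ j, Function.Injective (A · j)) {π : Perm (Fin (d + 1))}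
    (h : diag A π = LImonomial P (d + 1) A) :
    A (pivotRow A) (π⁻¹ (pivotRow A)) = pivotVal A := by
  set rows := univ.filter fun i => ∃ j, A i j = pivotVal A
  have hsub : (univ.filter fun i => pivotVal A = A i (π⁻¹ i)) ⊆ rows := fun i hi =>
    mem_filter.2 ⟨mem_univ _, _, (mem_filter.1 hi).2.symm⟩
  have hcard : rows.card ≤ (univ.filter fun i => pivotVal A = A i (π⁻¹ i)).card := by
    rw [← count_LImonomial A hA (pivotVal_le A), ← h, diag_eq_map_inv, Multiset.count_map]
    rfl
  have hmem : pivotRow A ∈ rows := mem_filter.2 ⟨mem_univ _, _, apply_pivotRow_pivotCol A⟩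
  rw [← eq_of_subset_of_card_le hsub hcard] at hmem
  exact (mem_filter.1 hmem).2.symm

lemma diag_minor_eq_LImonomial {d : ℕ} {A : Fin (d + 1) → Fin (d + 1) → Fin P}
    {π : Perm (Fin (d + 1))} {σ : Perm (Fin d)} (h : diag A π = LImonomial P (d + 1) A)
    (h₀ : π (pivotCol A) = pivotRow A)
    (hσ : ∀ j, π ((pivotCol A).succAbove j) = (pivotRow A).succAbove (σ j)) :
    diag (minor A) σ = LImonomial P d (minor A) := by
  rw [diag_eq_cons A h₀ hσ, apply_pivotRow_pivotCol A, LImonomial_succ] at h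
  exact (Multiset.cons_inj_right _).1 h

theorem exists_diag_eq_LImonomial : ∀ {d : ℕ} (A : Fin d → Fin d → Fin P),
    ∃ π, diag A π = LImonomial P d A
  | 0, _ => ⟨1, rfl⟩
  | _ + 1, A => by
    obtain ⟨σ, hσ⟩ := exists_diag_eq_LImonomial (minor A)
    obtain ⟨π, h₀, hπ⟩ := σ.exists_apply_eq_and_succAbove (pivotRow A) (pivotCol A)
    refine ⟨π, ?_⟩
    rw [diag_eq_cons A h₀ hπ, apply_pivotRow_pivotCol A, LImonomial_succ]
    exact congrArg _ hσ

section Shifted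

lemma injective_apply_of_eq_sub {d : ℕ} {r f : Fin d → Fin P} {A : Fin d → Fin d → Fin P}
    (hr : Function.Injective r) (hA : ∀ i j, A i j = r i - f j) (j : Fin d) :
    Function.Injective (A · j) := fun i i' h =>
  hr (sub_left_inj.1 ((hA i j).symm.trans (h.trans (hA i' j))))

lemma exists_diag_eq_LImonomial_apply_pivotCol {d : ℕ} {r f : Fin (d + 1) → Fin P}
    {A : Fin (d + 1) → Fin (d + 1) → Fin P} (hr : Function.Injective r)
    (hA : ∀ i j, A i j = r i - f j) {π : Perm (Fin (d + 1))}
    (h : diag A π = LImonomial P (d + 1) A) :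
    ∃ ρ : Perm (Fin (d + 1)), diag A ρ = LImonomial P (d + 1) A ∧
      ρ (pivotCol A) = pivotRow A ∧ f ∘ ⇑ρ⁻¹ = f ∘ ⇑π⁻¹ := by
  set j₁ := π⁻¹ (pivotRow A)
  have hf : f (pivotCol A) = f j₁ := by
    have hv := apply_inv_pivotRow (injective_apply_of_eq_sub hr hA) h
    rw [← apply_pivotRow_pivotCol A, hA, hA] at hv
    exact (sub_right_inj.1 hv).symm
  have hswap : f ∘ swap (pivotCol A) j₁ = f := by
    rw [comp_swap_eq_update, hf, Function.update_eq_self, ← hf, Function.update_eq_self]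
  refine ⟨π * swap (pivotCol A) j₁, ?_, by simp [j₁], ?_⟩
  · rw [diag_mul_of_comp_eq (B := fun i κ => r i - κ) hA π hswap, h]
  · rw [mul_inv_rev, swap_inv, Perm.coe_mul, ← Function.comp_assoc, hswap]

theorem comp_inv_eq_of_diag_eq_LImonomial : ∀ {d : ℕ} {r f : Fin d → Fin P},
    Function.Injective r → ∀ {A : Fin d → Fin d → Fin P}, (∀ i j, A i j = r i - f j) →
    ∀ {π π' : Perm (Fin d)}, diag A π = LImonomial P d A → diag A π' = LImonomial P d A →
    f ∘ ⇑π⁻¹ = f ∘ ⇑π'⁻¹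
  | 0, _, _, _, _, _, _, _, _, _ => funext fun i => i.elim0
  | _ + 1, _, f, hr, A, hA, _, _, h, h' => by
    obtain ⟨ρ, hρ, hρ₀, hρf⟩ := exists_diag_eq_LImonomial_apply_pivotCol hr hA h
    obtain ⟨ρ', hρ', hρ₀', hρf'⟩ := exists_diag_eq_LImonomial_apply_pivotCol hr hA h'
    obtain ⟨σ, hσ⟩ := Perm.exists_succAbove_of_apply_eq hρ₀
    obtain ⟨σ', hσ'⟩ := Perm.exists_succAbove_of_apply_eq hρ₀'
    have ih := comp_inv_eq_of_diag_eq_LImonomial (hr.comp Fin.succAbove_right_injective)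
      (f := f ∘ (pivotCol A).succAbove) (A := minor A) (fun i j => hA _ _)
      (diag_minor_eq_LImonomial hρ hρ₀ hσ) (diag_minor_eq_LImonomial hρ' hρ₀' hσ')
    rw [← hρf, ← hρf']
    funext i
    cases i using Fin.succAboveCases (pivotRow A) with
    | x => simp only [Function.comp_apply, Perm.inv_eq_iff_eq.2 hρ₀.symm,
        Perm.inv_eq_iff_eq.2 hρ₀'.symm]
    | p i =>
      simp only [Function.comp_apply, Perm.inv_apply_succAbove hσ, Perm.inv_apply_succAbove hσ']
      exact congrFun ih i

lemma diag_eq_LImonomial_iff {d : ℕ} {r f : Fin d → Fin P} {A : Fin d → Fin d → Fin P}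
    (hr : Function.Injective r) (hA : ∀ i j, A i j = r i - f j)
    {π₀ π : Perm (Fin d)} (hπ₀ : diag A π₀ = LImonomial P d A) :
    diag A π = LImonomial P d A ↔ f ∘ ⇑(π₀⁻¹ * π) = f := by
  constructor
  · intro h
    funext j
    simpa using congrFun (comp_inv_eq_of_diag_eq_LImonomial hr hA hπ₀ h) (π j)
  · intro hσ
    rw [← mul_inv_cancel_left π₀ π, diag_mul_of_comp_eq (B := fun i κ => r i - κ) hA π₀ hσ, hπ₀]

end Shifted

end LImonomial

/-- Row `i` of `M` is row `r i` of `G(c)` and column `j` lies in block `D_{(col j).1} W_P`, so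
entry `(i, j)` is a nonzero multiple of `c_{r i - (col j).1}`. -/
theorem li_monomial_diagonal_count_general (P : ℕ) [NeZero P] (d : ℕ)
    (r : Fin d → Fin P) (hr : Function.Injective r)
    (col : Fin d → Fin P × Fin P)
    (A : Fin d → Fin d → Fin P) (hA : ∀ i j, A i j = r i - (col j).1) :
    (Finset.univ.filter fun π : Equiv.Perm (Fin d) =>
        (Finset.univ.val.map fun j : Fin d => A (π j) j) = LImonomial P d A).card
      = ∏ κ : Fin P,
          Nat.factorial (Finset.univ.filter fun j : Fin d => (col j).1 = κ).card := by
  set f : Fin d → Fin P := fun j => (col j).1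
  obtain ⟨π₀, hπ₀⟩ := LImonomial.exists_diag_eq_LImonomial A
  calc _ = (univ.filter fun π : Perm (Fin d) => f ∘ ⇑(π₀⁻¹ * π) = f).card :=
        congrArg card (filter_congr fun π _ => LImonomial.diag_eq_LImonomial_iff hr hA hπ₀)
    _ = Fintype.card {σ : Perm (Fin d) // f ∘ ⇑σ = f} := by
        rw [← Fintype.card_subtype]
        exact Fintype.card_congr (subtypeEquiv (Equiv.mulLeft π₀⁻¹) fun _ => Iff.rfl)
    _ = _ := by
        rw [DomMulAct.stabilizer_card]
        simp only [Fintype.card_subtype, f]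

/-- Let `M` be a `d×d` submatrix of the Gabor matrix `G(c)`, with rows
`r : Fin d → Fin P` and columns `col : Fin d → Fin P × Fin P` (so entry `(i,j)` is a
nonzero constant times `c_{r i − (col j).1}`), and let `ℓ_κ` be the number of columns
drawn from the block `D_κ W_P`.  Then the number of generalized diagonals of `M`
(i.e. permutations `π` of `Fin d`) whose product of entries is a nonzero constant
multiple of the LI monomial `p_M` equals `∏_κ ℓ_κ!`. -/
theorem li_monomial_diagonal_count (P : ℕ) [NeZero P] (d : ℕ)
    (r : Fin d → Fin P) (hr : Function.Injective r)
    (col : Fin d → Fin P × Fin P) (hcol : Function.Injective col)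
    (A : Fin d → Fin d → Fin P) (hA : ∀ i j, A i j = r i - (col j).1) :
    (Finset.univ.filter fun π : Equiv.Perm (Fin d) =>
        (Finset.univ.val.map fun j : Fin d => A (π j) j) = LImonomial P d A).card
      = ∏ κ : Fin P,
          Nat.factorial (Finset.univ.filter fun j : Fin d => (col j).1 = κ).card :=
  li_monomial_diagonal_count_general P d r hr col A hA
end
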